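/- arXiv:2303.02965 — 3 statements merged into one kernel-verified Lean document; each statement's English description precedes it below -/
import Mathlib

section
/- Let (w_i)_{i∈[n]} be a weight sequence satisfying Assumption 1 with parameters τ ∈ (2,3) and C, w_0 > 0, and let μ = C(τ-1)/(τ-2) · w_0^{2-τ}. Then the truncated sum of weights satisfies Σ_{i∈[n]} w_i · 1{w_i ≤ √n} = μ n (1 + o(1)) as n → ∞. -/
open MeasureTheory ProbabilityTheory Filter Finset Asymptotics
open scoped Topology ENNReal NNReal Classical

noncomputable section

/-- Assumption 1: the empirical weight distribution has a power-law tail,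
`1 - F_n(x) = C x^(1-τ) (1 + o(1))` uniformly for `w0 ≤ x ≤ n^(1/(τ-1)) / log n`. -/
def Assumption1 (τ C w0 : ℝ) (w : (n : ℕ) → Fin n → ℝ) : Prop :=
  ∀ ε > (0:ℝ), ∃ N : ℕ, ∀ n ≥ N, ∀ x : ℝ, w0 ≤ x →
    x ≤ (n : ℝ) ^ ((1:ℝ) / (τ - 1)) / Real.log n →
    |((univ.filter fun i : Fin n => x < w n i).card : ℝ) / n - C * x ^ (1 - τ)|
      ≤ ε * (C * x ^ (1 - τ))


lemma step_antitone (c : ℝ) : Antitone (fun x : ℝ => if x < c then (1:ℝ) else 0) := by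
  intro x y hxy
  by_cases hy : y < c
  · simp [hy, lt_of_le_of_lt hxy hy]
  · simp only [hy, if_false]
    split <;> norm_num

lemma step_integral {w0 M c : ℝ} (h1 : w0 ≤ c) (h2 : c ≤ M) :
    ∫ x in w0..M, (if x < c then (1:ℝ) else 0) = c - w0 := by
  have hint1 : IntervalIntegrable (fun x : ℝ => if x < c then (1:ℝ) else 0) volume w0 c :=
    (step_antitone c).intervalIntegrable
  have hint2 : IntervalIntegrable (fun x : ℝ => if x < c then (1:ℝ) else 0) volume c M :=
    (step_antitone c).intervalIntegrable
  rw [← intervalIntegral.integral_add_adjacent_intervals hint1 hint2]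
  have e1 : (∫ x in w0..c, (if x < c then (1:ℝ) else 0)) = ∫ x in w0..c, (1:ℝ) := by
    apply intervalIntegral.integral_congr_ae
    have hc : ∀ᵐ x : ℝ, x ≠ c := by
      rw [ae_iff]
      simp [not_not, Set.setOf_eq_eq_singleton, Real.volume_singleton]
    filter_upwards [hc] with x hx hmem
    rw [Set.uIoc_of_le h1] at hmem
    have : x < c := lt_of_le_of_ne hmem.2 hx
    simp [this]
  have e2 : (∫ x in c..M, (if x < c then (1:ℝ) else 0)) = ∫ x in c..M, (0:ℝ) := by
    apply intervalIntegral.integral_congr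
    intro x hx
    rw [Set.uIcc_of_le h2] at hx
    have : ¬ x < c := not_lt.2 hx.1
    simp [this]
  rw [e1, e2]
  simp

lemma final_arith (τ w0 ε NfM I Q : ℝ) (n : ℝ) (M : ℝ)
    (hIub : I ≤ (1 + ε) * n * (w0 / (τ - 2) - Q / (τ - 2)))
    (hIlb : (1 - ε) * n * (w0 / (τ - 2) - Q / (τ - 2)) - NfM * (M - w0) ≤ I)
    (hNfMM : NfM * M ≤ 2 * n * Q)
    (h1 : 0 ≤ n * (Q / (τ - 2))) (h2 : 0 ≤ ε * n * (Q / (τ - 2))) (h3 : 0 ≤ n * Q)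
    (hw0NfM : 0 ≤ w0 * NfM) :
    |w0 * (n - NfM) + I - (w0 + w0 / (τ - 2)) * n|
      ≤ n * (ε * w0 / (τ - 2) + Q / (τ - 2) + 2 * Q) := by
  rw [abs_le]
  constructor
  · ring_nf at hIlb hNfMM h1 h2 h3 hw0NfM ⊢
    linarith
  · ring_nf at hIub h1 h2 h3 hw0NfM ⊢
    linarith

lemma core_bound (τ C w0 : ℝ) (hτ1 : 2 < τ) (hτ2 : τ < 3) (hC : 0 < C) (hw0 : 0 < w0)
    (hCw : C = w0 ^ (τ - 1))
    {n : ℕ} (hn : 0 < n) (w : Fin n → ℝ) (hww0 : ∀ i, w0 ≤ w i)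
    {M : ℝ} (hw0M : w0 ≤ M) {ε : ℝ} (hε0 : 0 < ε) (hε1 : ε ≤ 1)
    (hbound : ∀ x : ℝ, w0 ≤ x → x ≤ M →
      |((univ.filter fun i => x < w i).card : ℝ) / n - C * x ^ (1 - τ)|
        ≤ ε * (C * x ^ (1 - τ))) :
    |(∑ i : Fin n, if w i ≤ M then w i else 0) - C * (τ - 1) / (τ - 2) * w0 ^ (2 - τ) * n|
      ≤ n * (ε * w0 / (τ - 2) + C * M ^ (2 - τ) / (τ - 2) + 2 * (C * M ^ (2 - τ))) := by
  have hn0 : (0:ℝ) < n := by exact_mod_cast hn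
  have hd : (0:ℝ) < τ - 2 := by linarith
  have hM0 : (0:ℝ) < M := lt_of_lt_of_le hw0 hw0M
  set g : ℝ → ℝ := fun x => ∑ i : Fin n, if x < w i ∧ w i ≤ M then (1:ℝ) else 0 with hg_def
  have anti_i : ∀ i : Fin n, Antitone (fun x : ℝ => if x < w i ∧ w i ≤ M then (1:ℝ) else 0) := by
    intro i
    by_cases h : w i ≤ M
    · intro x y hxy
      simp only [h, and_true]
      exact step_antitone (w i) hxy
    · intro x y hxy
      simp [h]
  have hg_anti : Antitone g := fun x y hxy => Finset.sum_le_sum fun i _ => anti_i i hxy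
  have hg_int : IntervalIntegrable g volume w0 M := hg_anti.intervalIntegrable
  -- representation of the truncated sum
  have key : ∀ i : Fin n, (if w i ≤ M then w i else 0)
      = (if w i ≤ M then w0 else 0) + ∫ x in w0..M, (if x < w i ∧ w i ≤ M then (1:ℝ) else 0) := by
    intro i
    by_cases h : w i ≤ M
    · simp only [h, if_true, and_true]
      rw [step_integral (hww0 i) h]
      ring
    · simp [h]
  have hrepr : (∑ i : Fin n, if w i ≤ M then w i else 0)
      = w0 * ((univ.filter fun i : Fin n => w i ≤ M).card : ℝ) + ∫ x in w0..M, g x := by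
    rw [Finset.sum_congr rfl fun i _ => key i, Finset.sum_add_distrib]
    congr 1
    · have h1 : ∀ i : Fin n, (if w i ≤ M then w0 else 0) = w0 * (if w i ≤ M then (1:ℝ) else 0) := by
        intro i; split <;> ring
      rw [Finset.sum_congr rfl fun i _ => h1 i, ← Finset.mul_sum, Finset.sum_boole]
    · exact (intervalIntegral.integral_finset_sum fun i _ => (anti_i i).intervalIntegrable).symm
  set Nf : ℝ → ℝ := fun x => ((univ.filter fun i : Fin n => x < w i).card : ℝ) with hNf_def
  have hNfx : ∀ x : ℝ, Nf x = ((univ.filter fun i : Fin n => x < w i).card : ℝ) := by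
    intro x; simp only [hNf_def]
  have hbound' : ∀ x : ℝ, w0 ≤ x → x ≤ M →
      (1 - ε) * (C * x ^ (1 - τ)) * n ≤ Nf x ∧ Nf x ≤ (1 + ε) * (C * x ^ (1 - τ)) * n := by
    intro x h1 h2
    have h := abs_le.1 (hbound x h1 h2)
    rw [← hNfx x] at h
    have e1 : (1 - ε) * (C * x ^ (1 - τ)) = C * x ^ (1 - τ) - ε * (C * x ^ (1 - τ)) := by ring
    have e2 : (1 + ε) * (C * x ^ (1 - τ)) = C * x ^ (1 - τ) + ε * (C * x ^ (1 - τ)) := by ring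
    constructor
    · have h3 : (1 - ε) * (C * x ^ (1 - τ)) ≤ Nf x / n := by rw [e1]; linarith [h.1]
      calc (1 - ε) * (C * x ^ (1 - τ)) * n = ((1 - ε) * (C * x ^ (1 - τ))) * n := by ring
        _ ≤ (Nf x / n) * n := by exact mul_le_mul_of_nonneg_right h3 hn0.le
        _ = Nf x := div_mul_cancel₀ _ (ne_of_gt hn0)
    · have h3 : Nf x / n ≤ (1 + ε) * (C * x ^ (1 - τ)) := by rw [e2]; linarith [h.2]
      calc Nf x = (Nf x / n) * n := (div_mul_cancel₀ _ (ne_of_gt hn0)).symm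
        _ ≤ ((1 + ε) * (C * x ^ (1 - τ))) * n := mul_le_mul_of_nonneg_right h3 hn0.le
  have hg_card : ∀ x : ℝ, g x = ((univ.filter fun i : Fin n => x < w i ∧ w i ≤ M).card : ℝ) := by
    intro x
    rw [hg_def]
    simp [Finset.sum_boole]
  have hg_le_Nf : ∀ x : ℝ, g x ≤ Nf x := by
    intro x
    rw [hg_card, hNfx x]
    have hsub : (univ.filter fun i : Fin n => x < w i ∧ w i ≤ M)
        ⊆ univ.filter fun i : Fin n => x < w i := by
      intro i hi
      simp only [Finset.mem_filter, Finset.mem_univ, true_and] at *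
      exact hi.1
    exact_mod_cast Finset.card_le_card hsub
  have hg_ge : ∀ x : ℝ, Nf x - Nf M ≤ g x := by
    intro x
    have hsub : (univ.filter fun i : Fin n => x < w i) ⊆
        (univ.filter fun i : Fin n => x < w i ∧ w i ≤ M) ∪ (univ.filter fun i : Fin n => M < w i) := by
      intro i hi
      simp only [Finset.mem_filter, Finset.mem_union, Finset.mem_univ, true_and] at *
      rcases le_or_gt (w i) M with h | h
      · exact Or.inl ⟨hi, h⟩
      · exact Or.inr h
    have h1 := (Finset.card_le_card hsub).trans (Finset.card_union_le _ _)
    have h1' : ((univ.filter fun i : Fin n => x < w i).card : ℝ)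
        ≤ ((univ.filter fun i : Fin n => x < w i ∧ w i ≤ M).card : ℝ)
          + ((univ.filter fun i : Fin n => M < w i).card : ℝ) := by exact_mod_cast h1
    rw [hg_card, hNfx x, hNfx M]
    linarith
  have h0mem : (0:ℝ) ∉ Set.uIcc w0 M := Set.notMem_uIcc_of_lt hw0 hM0
  have hrpow_int : IntervalIntegrable (fun x : ℝ => x ^ (1 - τ)) volume w0 M :=
    intervalIntegral.intervalIntegrable_rpow (Or.inr h0mem)
  have hA : (∫ x in w0..M, x ^ (1 - τ)) = (w0 ^ (2 - τ) - M ^ (2 - τ)) / (τ - 2) := by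
    rw [integral_rpow (Or.inr ⟨by intro h; linarith, h0mem⟩)]
    have e : (1:ℝ) - τ + 1 = 2 - τ := by ring
    have h2τ : (2:ℝ) - τ ≠ 0 := by intro h; linarith
    rw [e, div_eq_div_iff h2τ (ne_of_gt hd)]
    ring
  -- integral upper bound
  have hIu : (∫ x in w0..M, g x) ≤ (1 + ε) * C * n * ((w0 ^ (2 - τ) - M ^ (2 - τ)) / (τ - 2)) := by
    have hmono := intervalIntegral.integral_mono_on hw0M hg_int
      (hrpow_int.const_mul ((1 + ε) * C * n)) (fun x hx => ?_)
    · rw [intervalIntegral.integral_const_mul, hA] at hmono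
      exact hmono
    · calc g x ≤ Nf x := hg_le_Nf x
        _ ≤ (1 + ε) * (C * x ^ (1 - τ)) * n := (hbound' x hx.1 hx.2).2
        _ = (1 + ε) * C * n * x ^ (1 - τ) := by ring
  -- integral lower bound
  have hIl : (1 - ε) * C * n * ((w0 ^ (2 - τ) - M ^ (2 - τ)) / (τ - 2)) - Nf M * (M - w0)
      ≤ ∫ x in w0..M, g x := by
    have hint : IntervalIntegrable (fun x : ℝ => (1 - ε) * C * n * x ^ (1 - τ) - Nf M) volume w0 M :=
      (hrpow_int.const_mul _).sub intervalIntegrable_const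
    have hmono := intervalIntegral.integral_mono_on hw0M hint hg_int (fun x hx => ?_)
    · rw [intervalIntegral.integral_sub (hrpow_int.const_mul _) intervalIntegrable_const,
        intervalIntegral.integral_const_mul, hA, intervalIntegral.integral_const,
        smul_eq_mul] at hmono
      linarith
    · have h1 := (hbound' x hx.1 hx.2).1
      have h2 := hg_ge x
      have e : (1 - ε) * C * (n:ℝ) * x ^ (1 - τ) = (1 - ε) * (C * x ^ (1 - τ)) * n := by ring
      rw [e]
      linarith
  -- counting at M
  have hK : ((univ.filter fun i : Fin n => w i ≤ M).card : ℝ) = n - Nf M := by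
    have h1 := Finset.card_filter_add_card_filter_not
      (s := (univ : Finset (Fin n))) (p := fun i => w i ≤ M)
    have h2 : (univ.filter fun i : Fin n => ¬ w i ≤ M) = univ.filter fun i : Fin n => M < w i := by
      ext i
      simp [not_le]
    rw [h2, Finset.card_univ, Fintype.card_fin] at h1
    rw [hNfx M]
    have := congrArg (fun k : ℕ => (k : ℝ)) h1
    push_cast at this
    linarith
  have hNfM := hbound' M hw0M le_rfl
  have hNfM_nonneg : (0:ℝ) ≤ Nf M := by rw [hNfx M]; positivity
  -- algebraic facts
  have hCw0 : C * w0 ^ (2 - τ) = w0 := by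
    rw [hCw, ← Real.rpow_add hw0]
    have e : τ - 1 + (2 - τ) = (1:ℝ) := by ring
    rw [e, Real.rpow_one]
  have hQ : C * M ^ (1 - τ) * M = C * M ^ (2 - τ) := by
    have h := Real.rpow_add hM0 (1 - τ) 1
    rw [Real.rpow_one] at h
    have e : (1 - τ) + 1 = 2 - τ := by ring
    rw [e] at h
    rw [mul_assoc, ← h]
  have hQ0 : (0:ℝ) ≤ C * M ^ (2 - τ) := by positivity
  have hμ : C * (τ - 1) / (τ - 2) * w0 ^ (2 - τ) = w0 + w0 / (τ - 2) := by
    have e : C * (τ - 1) / (τ - 2) * w0 ^ (2 - τ) = (C * w0 ^ (2 - τ)) * (τ - 1) / (τ - 2) := by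
      ring
    rw [e, hCw0]
    field_simp
    ring
  have hCB : C * ((w0 ^ (2 - τ) - M ^ (2 - τ)) / (τ - 2))
      = w0 / (τ - 2) - (C * M ^ (2 - τ)) / (τ - 2) := by
    have e : C * (w0 ^ (2 - τ) - M ^ (2 - τ)) = w0 - C * M ^ (2 - τ) := by
      rw [mul_sub, hCw0]
    rw [← mul_div_assoc, e, sub_div]
  set Q : ℝ := C * M ^ (2 - τ) with hQ_def
  set I : ℝ := ∫ x in w0..M, g x with hI_def
  have hIub : I ≤ (1 + ε) * n * (w0 / (τ - 2) - Q / (τ - 2)) := by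
    calc I ≤ (1 + ε) * C * n * ((w0 ^ (2 - τ) - M ^ (2 - τ)) / (τ - 2)) := hIu
      _ = (1 + ε) * n * (C * ((w0 ^ (2 - τ) - M ^ (2 - τ)) / (τ - 2))) := by ring
      _ = (1 + ε) * n * (w0 / (τ - 2) - Q / (τ - 2)) := by rw [hCB]
  have hIlb : (1 - ε) * n * (w0 / (τ - 2) - Q / (τ - 2)) - Nf M * (M - w0) ≤ I := by
    calc (1 - ε) * n * (w0 / (τ - 2) - Q / (τ - 2)) - Nf M * (M - w0)
        = (1 - ε) * n * (C * ((w0 ^ (2 - τ) - M ^ (2 - τ)) / (τ - 2))) - Nf M * (M - w0) := by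
          rw [hCB]
      _ = (1 - ε) * C * n * ((w0 ^ (2 - τ) - M ^ (2 - τ)) / (τ - 2)) - Nf M * (M - w0) := by ring
      _ ≤ I := hIl
  -- Nf M * M bound
  have hNfMM : Nf M * M ≤ 2 * n * Q := by
    have h1 : Nf M * M ≤ ((1 + ε) * (C * M ^ (1 - τ)) * n) * M :=
      mul_le_mul_of_nonneg_right hNfM.2 hM0.le
    have h2 : ((1 + ε) * (C * M ^ (1 - τ)) * n) * M = (1 + ε) * n * (C * M ^ (1 - τ) * M) := by
      ring
    rw [h2, hQ] at h1
    nlinarith [mul_nonneg hn0.le hQ0]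
  -- final assembly
  rw [hrepr, hK, hμ]
  have hQd0 : (0:ℝ) ≤ Q / (τ - 2) := div_nonneg hQ0 hd.le
  exact final_arith τ w0 ε (Nf M) I Q n M hIub hIlb hNfMM
    (mul_nonneg hn0.le hQd0) (by positivity) (mul_nonneg hn0.le hQ0)
    (mul_nonneg hw0.le hNfM_nonneg)

/-- Lemma 5.2: the truncated sum of the weights satisfies
`Σ_i w_i 1{w_i ≤ √n} = μ n (1 + o(1))`, with `μ = C (τ-1)/(τ-2) w₀^(2-τ)`. -/
theorem truncated_sum_weights_asymptotic
    (τ C w0 : ℝ) (hτ1 : 2 < τ) (hτ2 : τ < 3) (hC : 0 < C) (hw0 : 0 < w0)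
    (hCw : C = w0 ^ (τ - 1))
    (w : (n : ℕ) → Fin n → ℝ) (hww0 : ∀ n (i : Fin n), w0 ≤ w n i)
    (hA1 : Assumption1 τ C w0 w)
    :
    Tendsto
      (fun n : ℕ =>
        (∑ i : Fin n, if w n i ≤ Real.sqrt n then w n i else 0)
          / (C * (τ - 1) / (τ - 2) * w0 ^ (2 - τ) * n))
      atTop (𝓝 1) := by
  have hd : (0:ℝ) < τ - 2 := by linarith
  set μ : ℝ := C * (τ - 1) / (τ - 2) * w0 ^ (2 - τ) with hμ_def
  have hμ_pos : 0 < μ := by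
    rw [hμ_def]
    exact mul_pos (div_pos (mul_pos hC (by linarith)) hd) (Real.rpow_pos_of_pos hw0 _)
  rw [Metric.tendsto_atTop]
  intro δ hδ
  set ε : ℝ := min 1 (δ * μ * (τ - 2) / (2 * w0)) with hε_def
  have hε0 : 0 < ε := lt_min one_pos (by positivity)
  have hε1 : ε ≤ 1 := min_le_left _ _
  have hεb : ε * w0 / (τ - 2) ≤ δ * μ / 2 := by
    have h := min_le_right 1 (δ * μ * (τ - 2) / (2 * w0))
    calc ε * w0 / (τ - 2) ≤ (δ * μ * (τ - 2) / (2 * w0)) * w0 / (τ - 2) := by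
          gcongr
      _ = δ * μ / 2 := by field_simp
  obtain ⟨N₁, hN₁⟩ := hA1 ε hε0
  -- sqrt tends to infinity
  have hsqrt : Tendsto (fun n : ℕ => Real.sqrt n) atTop atTop := by
    have h := (tendsto_rpow_atTop (y := (1:ℝ)/2) (by norm_num)).comp
      (tendsto_natCast_atTop_atTop (R := ℝ))
    exact h.congr fun n => (Real.sqrt_eq_rpow _).symm
  have E1 : ∀ᶠ n : ℕ in atTop, w0 ≤ Real.sqrt n := hsqrt.eventually_ge_atTop w0
  -- the vanishing term
  have hM2τ : Tendsto (fun n : ℕ => Real.sqrt n ^ (2 - τ)) atTop (𝓝 0) := by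
    have h := (tendsto_rpow_neg_atTop (y := τ - 2) hd).comp hsqrt
    exact h.congr fun n => by
      show Real.sqrt (n:ℝ) ^ (-(τ - 2)) = Real.sqrt (n:ℝ) ^ (2 - τ)
      rw [show -(τ - 2) = 2 - τ by ring]
  have hr : Tendsto (fun n : ℕ =>
      C * Real.sqrt n ^ (2 - τ) / (τ - 2) + 2 * (C * Real.sqrt n ^ (2 - τ)))
      atTop (𝓝 (C * 0 / (τ - 2) + 2 * (C * 0))) :=
    ((hM2τ.const_mul C).div_const _).add ((hM2τ.const_mul C).const_mul 2)
  have hr0 : Tendsto (fun n : ℕ =>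
      C * Real.sqrt n ^ (2 - τ) / (τ - 2) + 2 * (C * Real.sqrt n ^ (2 - τ)))
      atTop (𝓝 0) := by
    convert hr using 2
    ring
  have hδμ2 : (0:ℝ) < δ * μ / 2 := by positivity
  have E3 : ∀ᶠ n : ℕ in atTop,
      C * Real.sqrt n ^ (2 - τ) / (τ - 2) + 2 * (C * Real.sqrt n ^ (2 - τ)) < δ * μ / 2 :=
    hr0.eventually (gt_mem_nhds hδμ2)
  -- sqrt n ≤ n^(1/(τ-1)) / log n eventually
  have ha : (0:ℝ) < 1 / (τ - 1) - 1 / 2 := by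
    have h12 := one_div_lt_one_div_of_lt (by linarith : (0:ℝ) < τ - 1) (by linarith : τ - 1 < 2)
    linarith
  have hlog := (isLittleO_log_rpow_atTop ha).def one_pos
  have E2ℝ : ∀ᶠ x : ℝ in atTop, Real.sqrt x ≤ x ^ ((1:ℝ) / (τ - 1)) / Real.log x := by
    filter_upwards [hlog, eventually_ge_atTop (3:ℝ)] with x hx h3
    have hx0 : (0:ℝ) < x := by linarith
    have hlogpos : 0 < Real.log x := Real.log_pos (by linarith)
    have hxa : Real.log x ≤ x ^ (1 / (τ - 1) - 1 / 2) := by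
      have h1 : ‖Real.log x‖ = Real.log x := Real.norm_of_nonneg hlogpos.le
      have h2 : ‖x ^ (1 / (τ - 1) - 1 / 2)‖ = x ^ (1 / (τ - 1) - 1 / 2) :=
        Real.norm_of_nonneg (Real.rpow_nonneg hx0.le _)
      rw [one_mul] at hx
      rw [h1, h2] at hx
      exact hx
    rw [le_div_iff₀ hlogpos, Real.sqrt_eq_rpow]
    calc x ^ ((1:ℝ) / 2) * Real.log x
        ≤ x ^ ((1:ℝ) / 2) * x ^ (1 / (τ - 1) - 1 / 2) :=
          mul_le_mul_of_nonneg_left hxa (Real.rpow_nonneg hx0.le _)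
      _ = x ^ ((1:ℝ) / 2 + (1 / (τ - 1) - 1 / 2)) := (Real.rpow_add hx0 _ _).symm
      _ = x ^ ((1:ℝ) / (τ - 1)) := by rw [show (1:ℝ) / 2 + (1 / (τ - 1) - 1 / 2) = 1 / (τ - 1) by ring]
  have E2 : ∀ᶠ n : ℕ in atTop,
      Real.sqrt n ≤ (n : ℝ) ^ ((1:ℝ) / (τ - 1)) / Real.log n :=
    (tendsto_natCast_atTop_atTop (R := ℝ)).eventually E2ℝ
  have E4 : ∀ᶠ n : ℕ in atTop, 1 ≤ n := eventually_ge_atTop 1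
  have E5 : ∀ᶠ n : ℕ in atTop, N₁ ≤ n := eventually_ge_atTop N₁
  have hall := ((E1.and E2).and ((E3.and E4).and E5))
  rw [eventually_atTop] at hall
  obtain ⟨N, hN⟩ := hall
  refine ⟨N, fun n hn => ?_⟩
  obtain ⟨⟨h1, h2⟩, ⟨h3, h4⟩, h5⟩ := hN n hn
  have hnpos : 0 < n := h4
  have hn0 : (0:ℝ) < n := by exact_mod_cast hnpos
  have hbound : ∀ x : ℝ, w0 ≤ x → x ≤ Real.sqrt n →
      |((univ.filter fun i : Fin n => x < w n i).card : ℝ) / n - C * x ^ (1 - τ)|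
        ≤ ε * (C * x ^ (1 - τ)) := fun x hx1 hx2 => hN₁ n h5 x hx1 (hx2.trans h2)
  have key := core_bound τ C w0 hτ1 hτ2 hC hw0 hCw hnpos (w n) (hww0 n) h1 hε0 hε1 hbound
  rw [← hμ_def] at key
  have hμn : (0:ℝ) < μ * n := mul_pos hμ_pos hn0
  rw [Real.dist_eq, div_sub_one (ne_of_gt hμn), abs_div, abs_of_pos hμn, div_lt_iff₀ hμn]
  calc |(∑ i : Fin n, if w n i ≤ Real.sqrt n then w n i else 0) - μ * n|
      ≤ n * (ε * w0 / (τ - 2) + C * Real.sqrt n ^ (2 - τ) / (τ - 2)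
          + 2 * (C * Real.sqrt n ^ (2 - τ))) := key
    _ < n * (δ * μ) := by
        apply mul_lt_mul_of_pos_left _ hn0
        linarith
    _ = δ * (μ * n) := by ring
end
end

section
/- Let (w_i)_{i∈[n]} be a weight sequence satisfying Assumption 1 with parameters τ ∈ (2,3) and C, w_0 > 0, set μ = C(τ-1)/(τ-2) · w_0^{2-τ}, and let G be the inhomogeneous random graph on [n] with edge probabilities p_{ij} = min(w_i w_j/(μ n), 1), edges independent. Then the variance of the weighted triangle statistic is bounded: Var_0(W(G)) = O(1) as n → ∞ (in fact Var_0(W) ≤ (1/μ³)(1 + o(1)) up to a constant). -/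
open MeasureTheory ProbabilityTheory Filter Finset Asymptotics
open scoped Topology ENNReal NNReal Classical
noncomputable section
set_option maxHeartbeats 1000000

def muPar (τ C w0 : ℝ) : ℝ := C * (τ - 1) / (τ - 2) * w0 ^ (2 - τ)

def unifI : Measure ℝ := volume.restrict (Set.Icc 0 1)

def pIRG (n : ℕ) (μ : ℝ) (w : Fin n → ℝ) (i j : Fin n) : ℝ :=
  min (w i * w j / (μ * n)) 1

def H0Measure (n : ℕ) : Measure (Fin n → Fin n → ℝ) :=
  Measure.pi fun _ => Measure.pi fun _ => unifI

def edgeH0 (n : ℕ) (μ : ℝ) (w : Fin n → ℝ) (ω : Fin n → Fin n → ℝ) (i j : Fin n) : Prop :=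
  i ≠ j ∧ ω (min i j) (max i j) ≤ pIRG n μ w i j

def triH0 (n : ℕ) (μ : ℝ) (w : Fin n → ℝ) (ω : Fin n → Fin n → ℝ) (a b c : Fin n) : Prop :=
  edgeH0 n μ w ω a b ∧ edgeH0 n μ w ω b c ∧ edgeH0 n μ w ω c a

def WH0 (n : ℕ) (μ : ℝ) (w : Fin n → ℝ) (ω : Fin n → Fin n → ℝ) : ℝ :=
  ∑ a : Fin n, ∑ b : Fin n, ∑ c : Fin n,
    if triH0 n μ w ω a b c then (w a * w b * w c)⁻¹ else 0

-- ===================== measure basics =====================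

instance : IsProbabilityMeasure unifI := by
  constructor
  rw [unifI, Measure.restrict_apply_univ, Real.volume_Icc]
  norm_num

instance (n : ℕ) : IsProbabilityMeasure (H0Measure n) := by
  rw [H0Measure]; infer_instance

lemma unifI_Iic {p : ℝ} (h0 : 0 ≤ p) (h1 : p ≤ 1) :
    unifI (Set.Iic p) = ENNReal.ofReal p := by
  rw [unifI, Measure.restrict_apply measurableSet_Iic]
  have : Set.Iic p ∩ Set.Icc 0 1 = Set.Icc 0 p := by
    ext x
    simp only [Set.mem_inter_iff, Set.mem_Iic, Set.mem_Icc]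
    constructor
    · rintro ⟨h, h2, _⟩; exact ⟨h2, h⟩
    · rintro ⟨h2, h⟩; exact ⟨h, h2, h.trans h1⟩
  rw [this, Real.volume_Icc, sub_zero]

section Core

variable {n : ℕ} (μ : ℝ) (w : Fin n → ℝ)

/-- threshold attached to a normalized pair -/
def qq (p : Fin n × Fin n) : ℝ := pIRG n μ w p.1 p.2

/-- normalized edge -/
def ee (i j : Fin n) : Fin n × Fin n := (min i j, max i j)

/-- edge set of a triple -/
def sE (t : Fin n × Fin n × Fin n) : Finset (Fin n × Fin n) :=
  {ee t.1 t.2.1, ee t.2.1 t.2.2, ee t.2.2 t.1}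

/-- event that all edges in `s` are present -/
def Aev (s : Finset (Fin n × Fin n)) : Set (Fin n → Fin n → ℝ) :=
  {ω | ∀ p ∈ s, ω p.1 p.2 ≤ qq μ w p}

def PP (s : Finset (Fin n × Fin n)) : ℝ := ∏ p ∈ s, qq μ w p

lemma qq_nonneg (hμn : 0 ≤ μ * n) (hw : ∀ i, 0 ≤ w i) (p : Fin n × Fin n) : 0 ≤ qq μ w p :=
  le_min (div_nonneg (mul_nonneg (hw _) (hw _)) hμn) one_pos.le

lemma qq_le_one (p : Fin n × Fin n) : qq μ w p ≤ 1 := min_le_right _ _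

lemma Aev_pi (s : Finset (Fin n × Fin n)) :
    Aev μ w s = Set.univ.pi (fun u => Set.univ.pi (fun v =>
      if (u, v) ∈ s then Set.Iic (qq μ w (u, v)) else Set.univ)) := by
  ext ω
  simp only [Aev, Set.mem_setOf_eq, Set.mem_pi, Set.mem_univ, forall_true_left]
  constructor
  · intro h u v
    by_cases hm : (u, v) ∈ s
    · simp only [if_pos hm]; exact h _ hm
    · simp [if_neg hm]
  · intro h p hp
    have := h p.1 p.2
    rw [if_pos (by simpa using hp)] at this
    simpa using this

lemma Aev_meas (s : Finset (Fin n × Fin n)) : MeasurableSet (Aev μ w s) := by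
  rw [Aev_pi]
  refine MeasurableSet.univ_pi fun u => MeasurableSet.univ_pi fun v => ?_
  split
  · exact measurableSet_Iic
  · exact MeasurableSet.univ

lemma H0_Aev (hμn : 0 ≤ μ * n) (hw : ∀ i, 0 ≤ w i) (s : Finset (Fin n × Fin n)) :
    (H0Measure n (Aev μ w s)).toReal = PP μ w s := by
  rw [Aev_pi, H0Measure, Measure.pi_pi]
  have : ∀ u : Fin n, (Measure.pi fun _ : Fin n => unifI)
      (Set.univ.pi fun v => if (u, v) ∈ s then Set.Iic (qq μ w (u, v)) else Set.univ)
      = ∏ v : Fin n, (if (u, v) ∈ s then ENNReal.ofReal (qq μ w (u, v)) else 1) := by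
    intro u
    rw [Measure.pi_pi]
    congr 1; ext v
    split
    · exact unifI_Iic (qq_nonneg μ w hμn hw _) (qq_le_one μ w _)
    · simp
  simp only [this]
  rw [← Finset.prod_product']
  simp only [Prod.mk.eta]
  rw [Finset.prod_ite_mem, Finset.univ_product_univ, Finset.univ_inter]
  rw [ENNReal.toReal_prod, PP]
  exact Finset.prod_congr rfl fun p _ => ENNReal.toReal_ofReal (qq_nonneg μ w hμn hw p)


/-- validity: pairwise distinct -/
def vld (t : Fin n × Fin n × Fin n) : Prop := t.1 ≠ t.2.1 ∧ t.2.1 ≠ t.2.2 ∧ t.2.2 ≠ t.1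

/-- coefficient -/
def kk (t : Fin n × Fin n × Fin n) : ℝ :=
  if vld t then (w t.1 * w t.2.1 * w t.2.2)⁻¹ else 0

lemma qq_ee (i j : Fin n) : qq μ w (ee i j) = pIRG n μ w i j := by
  rcases le_total i j with h | h
  · simp [qq, ee, min_eq_left h, max_eq_right h, pIRG]
  · simp [qq, ee, min_eq_right h, max_eq_left h, pIRG, mul_comm]

lemma edge_iff (ω : Fin n → Fin n → ℝ) (i j : Fin n) (hij : i ≠ j) :
    edgeH0 n μ w ω i j ↔ ω (ee i j).1 (ee i j).2 ≤ qq μ w (ee i j) := by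
  rw [qq_ee]
  simp [edgeH0, ee, hij]

lemma mem_Aev_iff (ω : Fin n → Fin n → ℝ) (a b c : Fin n)
    (h1 : a ≠ b) (h2 : b ≠ c) (h3 : c ≠ a) :
    ω ∈ Aev μ w (sE (a, b, c)) ↔ triH0 n μ w ω a b c := by
  have e1 := edge_iff μ w ω a b h1
  have e2 := edge_iff μ w ω b c h2
  have e3 := edge_iff μ w ω c a h3
  simp only [Aev, sE, Set.mem_setOf_eq, Finset.mem_insert, Finset.mem_singleton,
    forall_eq_or_imp, forall_eq, triH0, e1, e2, e3]

lemma W_eq (ω : Fin n → Fin n → ℝ) :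
    WH0 n μ w ω = ∑ t : Fin n × Fin n × Fin n,
      kk w t * (Aev μ w (sE t)).indicator (fun _ => (1:ℝ)) ω := by
  rw [WH0, Fintype.sum_prod_type]
  congr 1; ext a
  rw [Fintype.sum_prod_type]
  congr 1; ext b
  congr 1; ext c
  by_cases ht : triH0 n μ w ω a b c
  · have hv : vld (a, b, c) := ⟨ht.1.1, ht.2.1.1, ht.2.2.1⟩
    have hm : ω ∈ Aev μ w (sE (a, b, c)) :=
      (mem_Aev_iff μ w ω a b c ht.1.1 ht.2.1.1 ht.2.2.1).2 ht
    rw [if_pos ht, kk, if_pos hv, Set.indicator_of_mem hm]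
    simp
  · rw [if_neg ht, kk]
    by_cases hv : vld (a, b, c)
    · have hm : ω ∉ Aev μ w (sE (a, b, c)) := fun hm =>
        ht ((mem_Aev_iff μ w ω a b c hv.1 hv.2.1 hv.2.2).1 hm)
      rw [if_pos hv, Set.indicator_of_notMem hm, mul_zero]
    · rw [if_neg hv, zero_mul]

lemma Aev_union (s s' : Finset (Fin n × Fin n)) :
    Aev μ w (s ∪ s') = Aev μ w s ∩ Aev μ w s' := by
  ext ω
  simp only [Aev, Set.mem_inter_iff, Set.mem_setOf_eq, Finset.mem_union]
  constructor
  · intro h; exact ⟨fun p hp => h p (Or.inl hp), fun p hp => h p (Or.inr hp)⟩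
  · rintro ⟨h1, h2⟩ p (hp | hp); exacts [h1 p hp, h2 p hp]

lemma indicator_mul_indicator (A B : Set (Fin n → Fin n → ℝ)) (ω : Fin n → Fin n → ℝ) :
    A.indicator (fun _ => (1:ℝ)) ω * B.indicator (fun _ => (1:ℝ)) ω
      = (A ∩ B).indicator (fun _ => (1:ℝ)) ω := by
  by_cases hA : ω ∈ A <;> by_cases hB : ω ∈ B <;>
    simp [Set.indicator_of_mem, Set.indicator_of_notMem, hA, hB, Set.mem_inter_iff]

lemma integrable_term (t : Fin n × Fin n × Fin n) (c : ℝ) (s : Finset (Fin n × Fin n)) :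
    Integrable (fun ω => c * (Aev μ w s).indicator (fun _ => (1:ℝ)) ω) (H0Measure n) :=
  (((integrable_const (1:ℝ)).indicator (Aev_meas μ w s)).const_mul c)

lemma integral_ind (hμn : 0 ≤ μ * n) (hw : ∀ i, 0 ≤ w i) (c : ℝ) (s : Finset (Fin n × Fin n)) :
    ∫ ω, c * (Aev μ w s).indicator (fun _ => (1:ℝ)) ω ∂(H0Measure n) = c * PP μ w s := by
  rw [MeasureTheory.integral_const_mul, MeasureTheory.integral_indicator_const _ (Aev_meas μ w s),
    smul_eq_mul, mul_one, measureReal_def, H0_Aev μ w hμn hw]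

lemma memℒp_W : MemLp (WH0 n μ w) 2 (H0Measure n) := by
  have : WH0 n μ w = fun ω => ∑ t : Fin n × Fin n × Fin n,
      kk w t * (Aev μ w (sE t)).indicator (fun _ => (1:ℝ)) ω := by
    ext ω; exact W_eq μ w ω
  rw [this]
  refine memLp_finset_sum _ (fun t _ => ?_)
  exact ((memLp_indicator_const 2 (Aev_meas μ w (sE t)) (1:ℝ)
    (Or.inr (measure_ne_top _ _))).const_mul (kk w t))

lemma variance_W (hμn : 0 ≤ μ * n) (hw : ∀ i, 0 ≤ w i) :
    variance (WH0 n μ w) (H0Measure n) = ∑ t : Fin n × Fin n × Fin n,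
      ∑ t' : Fin n × Fin n × Fin n, kk w t * kk w t' *
        (PP μ w (sE t ∪ sE t') - PP μ w (sE t) * PP μ w (sE t')) := by
  rw [variance_eq_sub (memℒp_W μ w)]
  have hW : ∀ ω, WH0 n μ w ω = ∑ t : Fin n × Fin n × Fin n,
      kk w t * (Aev μ w (sE t)).indicator (fun _ => (1:ℝ)) ω := W_eq μ w
  have h1 : ∫ ω, WH0 n μ w ω ∂(H0Measure n)
      = ∑ t : Fin n × Fin n × Fin n, kk w t * PP μ w (sE t) := by
    simp only [hW]
    rw [MeasureTheory.integral_finset_sum _ (fun t _ => integrable_term μ w t _ _)]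
    exact Finset.sum_congr rfl fun t _ => integral_ind μ w hμn hw _ _
  have h2 : ∫ ω, (WH0 n μ w ^ 2) ω ∂(H0Measure n)
      = ∑ t : Fin n × Fin n × Fin n, ∑ t' : Fin n × Fin n × Fin n,
          kk w t * kk w t' * PP μ w (sE t ∪ sE t') := by
    have : ∀ ω, (WH0 n μ w ^ 2) ω = ∑ t : Fin n × Fin n × Fin n,
        ∑ t' : Fin n × Fin n × Fin n, (kk w t * kk w t') *
          (Aev μ w (sE t ∪ sE t')).indicator (fun _ => (1:ℝ)) ω := by
      intro ω
      simp only [Pi.pow_apply, sq, hW, Finset.sum_mul_sum]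
      refine Finset.sum_congr rfl fun t _ => Finset.sum_congr rfl fun t' _ => ?_
      rw [Aev_union, ← indicator_mul_indicator]; ring
    simp only [this]
    rw [MeasureTheory.integral_finset_sum _ (fun t _ => ?_)]
    · refine Finset.sum_congr rfl fun t _ => ?_
      rw [MeasureTheory.integral_finset_sum _ (fun t' _ => integrable_term μ w t _ _)]
      exact Finset.sum_congr rfl fun t' _ => integral_ind μ w hμn hw _ _
    · exact MeasureTheory.integrable_finset_sum _ (fun t' _ => integrable_term μ w t _ _)
  rw [h1, h2, sq, Finset.sum_mul_sum]
  rw [← Finset.sum_sub_distrib]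
  refine Finset.sum_congr rfl fun t _ => ?_
  rw [← Finset.sum_sub_distrib]
  refine Finset.sum_congr rfl fun t' _ => ?_
  ring


-- ===================== combinatorial layer =====================

def wP (t : Fin n × Fin n × Fin n) : ℝ := w t.1 * w t.2.1 * w t.2.2

def prm (i : Fin 6) (t : Fin n × Fin n × Fin n) : Fin n × Fin n × Fin n :=
  match i with
  | ⟨0, _⟩ => (t.1, t.2.1, t.2.2)
  | ⟨1, _⟩ => (t.1, t.2.2, t.2.1)
  | ⟨2, _⟩ => (t.2.1, t.1, t.2.2)
  | ⟨3, _⟩ => (t.2.1, t.2.2, t.1)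
  | ⟨4, _⟩ => (t.2.2, t.1, t.2.1)
  | ⟨5, _⟩ => (t.2.2, t.2.1, t.1)

lemma prm_bij (i : Fin 6) : Function.Bijective (prm (n := n) i) := by
  rw [← Finite.injective_iff_bijective]
  fin_cases i <;>
    (rintro ⟨a, b, c⟩ ⟨a', b', c'⟩ h <;> simp [prm, Prod.ext_iff] at h ⊢ <;> tauto)

lemma sum_prm {M : Type*} [AddCommMonoid M] (i : Fin 6) (f : Fin n × Fin n × Fin n → M) :
    ∑ t : Fin n × Fin n × Fin n, f (prm i t) = ∑ t, f t :=
  Fintype.sum_bijective (prm i) (prm_bij i) _ _ (fun _ => rfl)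

lemma vld_prm (i : Fin 6) (t : Fin n × Fin n × Fin n) (h : vld t) : vld (prm i t) := by
  obtain ⟨h1, h2, h3⟩ := h
  fin_cases i <;> exact ⟨by first | assumption | (exact h1.symm) | (exact h2.symm) | (exact h3.symm),
    by first | assumption | (exact h1.symm) | (exact h2.symm) | (exact h3.symm),
    by first | assumption | (exact h1.symm) | (exact h2.symm) | (exact h3.symm)⟩

lemma wP_prm (i : Fin 6) (t : Fin n × Fin n × Fin n) : wP w (prm i t) = wP w t := by
  fin_cases i <;> simp only [prm, wP] <;> ring

lemma ee_comm (i j : Fin n) : ee i j = ee j i := by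
  simp [ee, min_comm, max_comm]

lemma sE_prm (i : Fin 6) (t : Fin n × Fin n × Fin n) : sE (prm i t) = sE t := by
  obtain ⟨a, b, c⟩ := t
  fin_cases i <;> (ext p; simp [sE, prm, Finset.mem_insert, ee_comm]) <;> tauto

lemma ee_eq {i j k l : Fin n} (h : ee i j = ee k l) :
    (i = k ∧ j = l) ∨ (i = l ∧ j = k) := by
  rcases le_total i j with hij | hij <;> rcases le_total k l with hkl | hkl <;>
    simp only [ee, min_eq_left, max_eq_right, min_eq_right, max_eq_left, hij, hkl,
      Prod.mk.injEq] at h <;> tauto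

lemma align (t : Fin n × Fin n × Fin n) (p : Fin n × Fin n) (hp : p ∈ sE t) :
    ∃ i z, prm i t = (p.1, p.2, z) := by
  obtain ⟨a, b, c⟩ := t
  simp only [sE, Finset.mem_insert, Finset.mem_singleton] at hp
  rcases hp with hp | hp | hp <;> subst hp
  · rcases le_total a b with h | h
    · exact ⟨0, c, by simp [prm, ee, min_eq_left h, max_eq_right h]⟩
    · exact ⟨2, c, by simp [prm, ee, min_eq_right h, max_eq_left h]⟩
  · rcases le_total b c with h | h
    · exact ⟨3, a, by simp [prm, ee, min_eq_left h, max_eq_right h]⟩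
    · exact ⟨5, a, by simp [prm, ee, min_eq_right h, max_eq_left h]⟩
  · rcases le_total c a with h | h
    · exact ⟨4, b, by simp [prm, ee, min_eq_left h, max_eq_right h]⟩
    · exact ⟨1, b, by simp [prm, ee, min_eq_right h, max_eq_left h]⟩


-- ===================== master pointwise bound =====================

def Hq (x y z z' : Fin n) : ℝ :=
  (qq μ w (ee x y) * qq μ w (ee y z) * qq μ w (ee z x)
    * qq μ w (ee y z') * qq μ w (ee z' x)) * ((w x)^2 * (w y)^2 * w z * w z')⁻¹

def phi3 (u v : Fin n × Fin n × Fin n) : ℝ := if u = v then ((μ * n)^3)⁻¹ else 0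

def phi2 (u v : Fin n × Fin n × Fin n) : ℝ :=
  if u.1 = v.1 ∧ u.2.1 = v.2.1 then Hq μ w u.1 u.2.1 u.2.2 v.2.2 else 0

def GG3 (t t' : Fin n × Fin n × Fin n) : ℝ :=
  ∑ i : Fin 6, ∑ j : Fin 6, phi3 μ (prm i t) (prm j t')

def GG2 (t t' : Fin n × Fin n × Fin n) : ℝ :=
  ∑ i : Fin 6, ∑ j : Fin 6, phi2 μ w (prm i t) (prm j t')

lemma Hq_nonneg (hμn : 0 ≤ μ * n) (hw : ∀ i, 0 ≤ w i) (x y z z' : Fin n) :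
    0 ≤ Hq μ w x y z z' := by
  have q0 := qq_nonneg μ w hμn hw
  refine mul_nonneg ?_ (inv_nonneg.2 ?_)
  · exact mul_nonneg (mul_nonneg (mul_nonneg (mul_nonneg (q0 _) (q0 _)) (q0 _)) (q0 _)) (q0 _)
  · exact mul_nonneg (mul_nonneg (mul_nonneg (sq_nonneg _) (sq_nonneg _)) (hw z)) (hw z')

lemma phi3_nonneg (hμn : 0 ≤ μ * n) (u v : Fin n × Fin n × Fin n) : 0 ≤ phi3 μ u v := by
  rw [phi3]; split
  · exact inv_nonneg.2 (pow_nonneg hμn 3)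
  · exact le_refl 0

lemma phi2_nonneg (hμn : 0 ≤ μ * n) (hw : ∀ i, 0 ≤ w i) (u v : Fin n × Fin n × Fin n) :
    0 ≤ phi2 μ w u v := by
  rw [phi2]; split
  · exact Hq_nonneg μ w hμn hw _ _ _ _
  · exact le_refl 0

lemma GG3_nonneg (hμn : 0 ≤ μ * n) (t t' : Fin n × Fin n × Fin n) : 0 ≤ GG3 μ t t' :=
  Finset.sum_nonneg fun _ _ => Finset.sum_nonneg fun _ _ => phi3_nonneg μ hμn _ _

lemma GG2_nonneg (hμn : 0 ≤ μ * n) (hw : ∀ i, 0 ≤ w i) (t t' : Fin n × Fin n × Fin n) :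
    0 ≤ GG2 μ w t t' :=
  Finset.sum_nonneg fun _ _ => Finset.sum_nonneg fun _ _ => phi2_nonneg μ w hμn hw _ _

lemma Pmono (hμn : 0 ≤ μ * n) (hw : ∀ i, 0 ≤ w i) {s F : Finset (Fin n × Fin n)}
    (hsub : s ⊆ F) : PP μ w F ≤ PP μ w s := by
  rw [PP, PP, ← Finset.prod_sdiff hsub]
  have h1 : ∏ p ∈ F \ s, qq μ w p ≤ 1 :=
    Finset.prod_le_one (fun p _ => qq_nonneg μ w hμn hw p) (fun p _ => qq_le_one μ w p)
  have h2 : 0 ≤ ∏ p ∈ s, qq μ w p :=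
    Finset.prod_nonneg (fun p _ => qq_nonneg μ w hμn hw p)
  nlinarith [Finset.prod_nonneg (fun p (_ : p ∈ F \ s) => qq_nonneg μ w hμn hw p)]

lemma PP_nonneg (hμn : 0 ≤ μ * n) (hw : ∀ i, 0 ≤ w i) (s : Finset (Fin n × Fin n)) :
    0 ≤ PP μ w s := Finset.prod_nonneg (fun p _ => qq_nonneg μ w hμn hw p)

lemma PP_pair (p1 p2 : Fin n × Fin n) (h : p1 ≠ p2) :
    PP μ w {p1, p2} = qq μ w p1 * qq μ w p2 := by
  rw [PP, Finset.prod_insert (by simpa using h), Finset.prod_singleton]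

lemma ee_ne_xy_yz {x y z : Fin n} (hxy : x ≠ y) (hzx : z ≠ x) : ee x y ≠ ee y z := by
  intro h; rcases ee_eq h with ⟨ha, _⟩ | ⟨ha, _⟩
  · exact hxy ha
  · exact hzx ha.symm

lemma ee_ne_xy_zx {x y z : Fin n} (hyz : y ≠ z) (hzx : z ≠ x) : ee x y ≠ ee z x := by
  intro h; rcases ee_eq h with ⟨ha, hb⟩ | ⟨_, hb⟩
  · exact hzx ha.symm
  · exact hyz hb

lemma ee_ne_yz_zx {x y z : Fin n} (hxy : x ≠ y) (hyz : y ≠ z) : ee y z ≠ ee z x := by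
  intro h; rcases ee_eq h with ⟨ha, _⟩ | ⟨ha, _⟩
  · exact hyz ha
  · exact hxy ha.symm

lemma PP_sE (x y z : Fin n) (hxy : x ≠ y) (hyz : y ≠ z) (hzx : z ≠ x) :
    PP μ w (sE (x, y, z)) = qq μ w (ee x y) * qq μ w (ee y z) * qq μ w (ee z x) := by
  have h1 := ee_ne_xy_yz hxy hzx
  have h2 := ee_ne_xy_zx hyz hzx
  have h3 := ee_ne_yz_zx hxy hyz
  rw [show sE ((x, y, z) : Fin n × Fin n × Fin n) = {ee x y, ee y z, ee z x} from rfl, PP,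
    Finset.prod_insert (by simp [h1, h2]), Finset.prod_insert (by simp [h3]),
    Finset.prod_singleton, mul_assoc]


lemma double_single_le (f : Fin 6 → Fin 6 → ℝ) (hf : ∀ i j, 0 ≤ f i j) (i j : Fin 6) :
    f i j ≤ ∑ i' : Fin 6, ∑ j' : Fin 6, f i' j' := by
  calc f i j ≤ ∑ j' : Fin 6, f i j' :=
        Finset.single_le_sum (fun j' _ => hf i j') (Finset.mem_univ j)
    _ ≤ ∑ i' : Fin 6, ∑ j' : Fin 6, f i' j' :=
        Finset.single_le_sum (fun i' _ => Finset.sum_nonneg fun j' _ => hf i' j')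
          (Finset.mem_univ i)

lemma qq_le_ww (hμn : 0 < μ * n) (x y : Fin n) :
    qq μ w (ee x y) ≤ w x * w y / (μ * n) := by
  rw [qq_ee]; exact min_le_left _ _

lemma master (hμn : 0 < μ * n) (hw : ∀ i, 0 < w i) (t t' : Fin n × Fin n × Fin n) :
    kk w t * kk w t' * (PP μ w (sE t ∪ sE t') - PP μ w (sE t) * PP μ w (sE t'))
      ≤ GG3 μ t t' + GG2 μ w t t' := by
  have hμn0 := hμn.le
  have hw0 : ∀ i, 0 ≤ w i := fun i => (hw i).le
  have hRHS : 0 ≤ GG3 μ t t' + GG2 μ w t t' :=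
    add_nonneg (GG3_nonneg μ hμn0 t t') (GG2_nonneg μ w hμn0 hw0 t t')
  by_cases hv : vld t
  swap
  · simp only [kk, if_neg hv, zero_mul]; exact hRHS
  by_cases hv' : vld t'
  swap
  · simp only [kk, if_neg hv', mul_zero, zero_mul]; exact hRHS
  by_cases hint : sE t ∩ sE t' = ∅
  · have hd : Disjoint (sE t) (sE t') := Finset.disjoint_iff_inter_eq_empty.2 hint
    rw [PP, Finset.prod_union hd]
    rw [show (∏ p ∈ sE t, qq μ w p) * ∏ p ∈ sE t', qq μ w p
      = PP μ w (sE t) * PP μ w (sE t') from rfl]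
    rw [sub_self, mul_zero]
    exact hRHS
  obtain ⟨p, hp⟩ := Finset.nonempty_iff_ne_empty.2 hint
  have hp1 : p ∈ sE t := (Finset.mem_inter.1 hp).1
  have hp2 : p ∈ sE t' := (Finset.mem_inter.1 hp).2
  obtain ⟨i, z, hz⟩ := align t p hp1
  obtain ⟨j, z', hz'⟩ := align t' p hp2
  set x := p.1 with hx
  set y := p.2 with hy
  have hvx : vld ((x, y, z) : Fin n × Fin n × Fin n) := hz ▸ vld_prm i t hv
  have hvx' : vld ((x, y, z') : Fin n × Fin n × Fin n) := hz' ▸ vld_prm j t' hv'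
  obtain ⟨hxy, hyz, hzx⟩ := hvx
  obtain ⟨-, hyz', hz'x⟩ := hvx'
  have hsEt : sE t = sE ((x, y, z) : Fin n × Fin n × Fin n) := by rw [← sE_prm i t, hz]
  have hsEt' : sE t' = sE ((x, y, z') : Fin n × Fin n × Fin n) := by rw [← sE_prm j t', hz']
  have hkt : kk w t = (w x * w y * w z)⁻¹ := by
    rw [kk, if_pos hv, show w t.1 * w t.2.1 * w t.2.2 = wP w t from rfl, ← wP_prm w i t, hz]; rfl
  have hkt' : kk w t' = (w x * w y * w z')⁻¹ := by
    rw [kk, if_pos hv', show w t'.1 * w t'.2.1 * w t'.2.2 = wP w t' from rfl, ← wP_prm w j t', hz']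
    rfl
  have hkk0 : 0 ≤ kk w t * kk w t' := by
    rw [hkt, hkt']
    exact mul_nonneg (inv_nonneg.2 (mul_nonneg (mul_nonneg (hw x).le (hw y).le) (hw z).le))
      (inv_nonneg.2 (mul_nonneg (mul_nonneg (hw x).le (hw y).le) (hw z').le))
  have hstep : kk w t * kk w t' * (PP μ w (sE t ∪ sE t') - PP μ w (sE t) * PP μ w (sE t'))
      ≤ kk w t * kk w t' * PP μ w (sE t ∪ sE t') := by
    have h1 : 0 ≤ PP μ w (sE t) * PP μ w (sE t') :=
      mul_nonneg (PP_nonneg μ w hμn0 hw0 _) (PP_nonneg μ w hμn0 hw0 _)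
    nlinarith
  have q0 := qq_nonneg μ w hμn0 hw0
  have hwx := hw x; have hwy := hw y; have hwz := hw z; have hwz' := hw z'
  by_cases hzz : z = z'
  · -- same vertex set: use GG3
    subst hzz
    have hPP : PP μ w (sE t ∪ sE t') ≤ PP μ w (sE t) :=
      Pmono μ w hμn0 hw0 Finset.subset_union_left
    have hP3 : PP μ w (sE t) = qq μ w (ee x y) * qq μ w (ee y z) * qq μ w (ee z x) := by
      rw [hsEt, PP_sE μ w x y z hxy hyz hzx]
    have hbound : kk w t * kk w t' * PP μ w (sE t ∪ sE t') ≤ ((μ * n)^3)⁻¹ := by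
      have l1 := qq_le_ww μ w hμn x y
      have l2 := qq_le_ww μ w hμn y z
      have l3 := qq_le_ww μ w hμn z x
      have hq3 : qq μ w (ee x y) * qq μ w (ee y z) * qq μ w (ee z x)
          ≤ (w x * w y / (μ * n)) * (w y * w z / (μ * n)) * (w z * w x / (μ * n)) := by
        gcongr <;>
          first
            | exact q0 _
            | exact div_nonneg (mul_nonneg (hw _).le (hw _).le) hμn0
            | exact mul_nonneg (hw _).le (hw _).le
            | positivity
      have heq : (w x * w y * w z)⁻¹ * (w x * w y * w z)⁻¹ *
          ((w x * w y / (μ * n)) * (w y * w z / (μ * n)) * (w z * w x / (μ * n)))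
          = ((μ * n)^3)⁻¹ := by
        field_simp
      calc kk w t * kk w t' * PP μ w (sE t ∪ sE t')
          ≤ kk w t * kk w t' * PP μ w (sE t) := by
            exact mul_le_mul_of_nonneg_left hPP hkk0
        _ ≤ ((μ * n)^3)⁻¹ := by
            rw [hkt, hkt', hP3, ← heq]
            refine mul_le_mul_of_nonneg_left hq3 ?_
            exact mul_nonneg (inv_nonneg.2 (mul_nonneg (mul_nonneg (hw x).le (hw y).le) (hw z).le))
              (inv_nonneg.2 (mul_nonneg (mul_nonneg (hw x).le (hw y).le) (hw z).le))
    have hphi : phi3 μ (prm i t) (prm j t') = ((μ * n)^3)⁻¹ := by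
      rw [phi3, if_pos (hz.trans hz'.symm)]
    have hGG : ((μ * n)^3)⁻¹ ≤ GG3 μ t t' := by
      rw [← hphi]
      simp only [GG3]
      exact double_single_le (fun i' j' => phi3 μ (prm i' t) (prm j' t'))
        (fun i' j' => phi3_nonneg μ hμn0 _ _) i j
    calc _ ≤ kk w t * kk w t' * PP μ w (sE t ∪ sE t') := hstep
      _ ≤ ((μ * n)^3)⁻¹ := hbound
      _ ≤ GG3 μ t t' := hGG
      _ ≤ GG3 μ t t' + GG2 μ w t t' := le_add_of_nonneg_right (GG2_nonneg μ w hμn0 hw0 t t')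
  · -- shared edge, distinct thirds: use GG2
    have hsplit : PP μ w (sE t ∪ sE t') = PP μ w (sE t) * PP μ w (sE t' \ sE t) := by
      rw [PP, ← Finset.union_sdiff_self_eq_union, Finset.prod_union Finset.disjoint_sdiff]
      rfl
    have hsub : ({ee y z', ee z' x} : Finset (Fin n × Fin n)) ⊆ sE t' \ sE t := by
      intro pp hpp
      rw [Finset.mem_sdiff]
      have hmem : pp ∈ sE t' := by
        rw [hsEt']
        rcases Finset.mem_insert.1 hpp with h | h
        · subst h; simp [sE]
        · rw [Finset.mem_singleton.1 h]; simp [sE]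
      refine ⟨hmem, ?_⟩
      rw [hsEt]
      simp only [sE, Finset.mem_insert, Finset.mem_singleton]
      rcases Finset.mem_insert.1 hpp with h | h
      · subst h
        push_neg
        refine ⟨?_, ?_, ?_⟩
        · exact fun h => (ee_ne_xy_yz hxy hz'x) h.symm
        · intro h
          rcases ee_eq h with ⟨ha, hb⟩ | ⟨ha, hb⟩
          · exact hzz hb.symm
          · exact hyz ha
        · intro h
          rcases ee_eq h with ⟨ha, hb⟩ | ⟨ha, hb⟩
          · exact hyz ha
          · exact hxy ha.symm
      · rw [Finset.mem_singleton.1 h]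
        push_neg
        refine ⟨?_, ?_, ?_⟩
        · intro h
          rcases ee_eq h with ⟨ha, hb⟩ | ⟨ha, hb⟩
          · exact hz'x ha
          · exact hyz' ha.symm
        · intro h
          rcases ee_eq h with ⟨ha, hb⟩ | ⟨ha, hb⟩
          · exact hyz' ha.symm
          · exact hzz ha.symm
        · intro h
          rcases ee_eq h with ⟨ha, hb⟩ | ⟨ha, hb⟩
          · exact hzz ha.symm
          · exact hz'x ha
    have hP2 : PP μ w (sE t' \ sE t) ≤ qq μ w (ee y z') * qq μ w (ee z' x) := by
      rw [← PP_pair μ w _ _ (ee_ne_yz_zx hxy hyz')]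
      exact Pmono μ w hμn0 hw0 hsub
    have hP3 : PP μ w (sE t) = qq μ w (ee x y) * qq μ w (ee y z) * qq μ w (ee z x) := by
      rw [hsEt, PP_sE μ w x y z hxy hyz hzx]
    have hHq : kk w t * kk w t' * (PP μ w (sE t) * (qq μ w (ee y z') * qq μ w (ee z' x)))
        = Hq μ w x y z z' := by
      rw [hkt, hkt', hP3, Hq]
      field_simp
    have hbound : kk w t * kk w t' * PP μ w (sE t ∪ sE t') ≤ Hq μ w x y z z' := by
      rw [hsplit, ← hHq]
      have h1 : 0 ≤ kk w t * kk w t' * PP μ w (sE t) :=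
        mul_nonneg hkk0 (PP_nonneg μ w hμn0 hw0 _)
      calc kk w t * kk w t' * (PP μ w (sE t) * PP μ w (sE t' \ sE t))
          = (kk w t * kk w t' * PP μ w (sE t)) * PP μ w (sE t' \ sE t) := by ring
        _ ≤ (kk w t * kk w t' * PP μ w (sE t)) * (qq μ w (ee y z') * qq μ w (ee z' x)) :=
            mul_le_mul_of_nonneg_left hP2 h1
        _ = kk w t * kk w t' * (PP μ w (sE t) * (qq μ w (ee y z') * qq μ w (ee z' x))) := by ring
    have hphi : phi2 μ w (prm i t) (prm j t') = Hq μ w x y z z' := by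
      rw [hz, hz', phi2, if_pos ⟨rfl, rfl⟩]
    have hGG : Hq μ w x y z z' ≤ GG2 μ w t t' := by
      rw [← hphi]
      simp only [GG2]
      exact double_single_le (fun i' j' => phi2 μ w (prm i' t) (prm j' t'))
        (fun i' j' => phi2_nonneg μ w hμn0 hw0 _ _) i j
    calc _ ≤ kk w t * kk w t' * PP μ w (sE t ∪ sE t') := hstep
      _ ≤ Hq μ w x y z z' := hbound
      _ ≤ GG2 μ w t t' := hGG
      _ ≤ GG3 μ t t' + GG2 μ w t t' := le_add_of_nonneg_left (GG3_nonneg μ hμn0 t t')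


-- ===================== summing the bounds =====================

lemma swap_tij {f : Fin 6 → Fin 6 → (Fin n × Fin n × Fin n) → (Fin n × Fin n × Fin n) → ℝ} :
    ∑ t : Fin n × Fin n × Fin n, ∑ t' : Fin n × Fin n × Fin n, ∑ i : Fin 6, ∑ j : Fin 6, f i j t t'
      = ∑ i : Fin 6, ∑ j : Fin 6, ∑ t : Fin n × Fin n × Fin n, ∑ t' : Fin n × Fin n × Fin n,
          f i j t t' := by
  calc ∑ t : Fin n × Fin n × Fin n, ∑ t' : Fin n × Fin n × Fin n,
        ∑ i : Fin 6, ∑ j : Fin 6, f i j t t'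
      = ∑ t : Fin n × Fin n × Fin n, ∑ i : Fin 6, ∑ t' : Fin n × Fin n × Fin n,
          ∑ j : Fin 6, f i j t t' :=
        Finset.sum_congr rfl fun t _ => Finset.sum_comm
    _ = ∑ i : Fin 6, ∑ t : Fin n × Fin n × Fin n, ∑ t' : Fin n × Fin n × Fin n,
          ∑ j : Fin 6, f i j t t' := Finset.sum_comm
    _ = ∑ i : Fin 6, ∑ t : Fin n × Fin n × Fin n, ∑ j : Fin 6,
          ∑ t' : Fin n × Fin n × Fin n, f i j t t' :=
        Finset.sum_congr rfl fun i _ => Finset.sum_congr rfl fun t _ => Finset.sum_comm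
    _ = ∑ i : Fin 6, ∑ j : Fin 6, ∑ t : Fin n × Fin n × Fin n,
          ∑ t' : Fin n × Fin n × Fin n, f i j t t' :=
        Finset.sum_congr rfl fun i _ => Finset.sum_comm

lemma sum_GG3 (hn : 0 < n) (hμ : 0 < μ) :
    ∑ t : Fin n × Fin n × Fin n, ∑ t' : Fin n × Fin n × Fin n, GG3 μ t t' = 36 / μ^3 := by
  have h1 : ∀ i j : Fin 6, ∑ t : Fin n × Fin n × Fin n, ∑ t' : Fin n × Fin n × Fin n,
      phi3 μ (prm i t) (prm j t') = (n:ℝ)^3 * ((μ * n)^3)⁻¹ := by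
    intro i j
    rw [sum_prm i (fun u => ∑ t' : Fin n × Fin n × Fin n, phi3 μ u (prm j t'))]
    have : ∀ u : Fin n × Fin n × Fin n, ∑ t' : Fin n × Fin n × Fin n, phi3 μ u (prm j t')
        = ((μ * n)^3)⁻¹ := by
      intro u
      rw [sum_prm j (fun v => phi3 μ u v)]
      simp [phi3, Finset.sum_ite_eq]
    simp only [this, Finset.sum_const, Finset.card_univ, Fintype.card_prod,
      Fintype.card_fin, nsmul_eq_mul]
    push_cast
    ring
  have hn' : (0:ℝ) < n := by exact_mod_cast hn
  have hc : (n:ℝ)^3 * ((μ * n)^3)⁻¹ = (μ^3)⁻¹ := by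
    rw [mul_pow, mul_inv]
    field_simp
  rw [show (∑ t : Fin n × Fin n × Fin n, ∑ t' : Fin n × Fin n × Fin n, GG3 μ t t')
      = ∑ i : Fin 6, ∑ j : Fin 6, ∑ t : Fin n × Fin n × Fin n,
          ∑ t' : Fin n × Fin n × Fin n, phi3 μ (prm i t) (prm j t') from
    swap_tij (f := fun i j t t' => phi3 μ (prm i t) (prm j t'))]
  simp only [h1, hc, Finset.sum_const, Finset.card_univ, Fintype.card_fin, nsmul_eq_mul]
  push_cast
  rw [div_eq_mul_inv]
  ring

lemma sum_GG2 (hμn : 0 ≤ μ * n) (hw : ∀ i, 0 ≤ w i) :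
    ∑ t : Fin n × Fin n × Fin n, ∑ t' : Fin n × Fin n × Fin n, GG2 μ w t t'
      ≤ 36 * ∑ x : Fin n, ∑ y : Fin n, ∑ z : Fin n, ∑ z' : Fin n, Hq μ w x y z z' := by
  have key : ∀ t : Fin n × Fin n × Fin n, ∑ t' : Fin n × Fin n × Fin n, phi2 μ w t t'
      ≤ ∑ z' : Fin n, Hq μ w t.1 t.2.1 t.2.2 z' := by
    intro t
    have hb : ∀ t' : Fin n × Fin n × Fin n, phi2 μ w t t'
        ≤ (if t.1 = t'.1 then (1:ℝ) else 0) * (if t.2.1 = t'.2.1 then (1:ℝ) else 0)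
            * Hq μ w t.1 t.2.1 t.2.2 t'.2.2 := by
      intro t'
      rw [phi2]
      by_cases h1 : t.1 = t'.1 <;> by_cases h2 : t.2.1 = t'.2.1 <;>
        simp [h1, h2, Hq_nonneg μ w hμn hw]
    calc ∑ t' : Fin n × Fin n × Fin n, phi2 μ w t t'
        ≤ ∑ t' : Fin n × Fin n × Fin n, (if t.1 = t'.1 then (1:ℝ) else 0)
            * (if t.2.1 = t'.2.1 then (1:ℝ) else 0) * Hq μ w t.1 t.2.1 t.2.2 t'.2.2 :=
          Finset.sum_le_sum fun t' _ => hb t'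
      _ = ∑ x' : Fin n, ∑ y' : Fin n, ∑ z' : Fin n, (if t.1 = x' then (1:ℝ) else 0)
            * (if t.2.1 = y' then (1:ℝ) else 0) * Hq μ w t.1 t.2.1 t.2.2 z' := by
          rw [Fintype.sum_prod_type]
          exact Finset.sum_congr rfl fun x' _ => Fintype.sum_prod_type _
      _ = ∑ z' : Fin n, Hq μ w t.1 t.2.1 t.2.2 z' := by
          rw [Finset.sum_comm]
          simp [Finset.sum_ite_eq, Finset.mul_sum]
  have h36 : ∀ t t' : Fin n × Fin n × Fin n, GG2 μ w t t'
      = ∑ i : Fin 6, ∑ j : Fin 6, phi2 μ w (prm i t) (prm j t') := fun _ _ => rfl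
  calc ∑ t : Fin n × Fin n × Fin n, ∑ t' : Fin n × Fin n × Fin n, GG2 μ w t t'
      = ∑ i : Fin 6, ∑ j : Fin 6, ∑ t : Fin n × Fin n × Fin n,
          ∑ t' : Fin n × Fin n × Fin n, phi2 μ w (prm i t) (prm j t') :=
        swap_tij (f := fun i j t t' => phi2 μ w (prm i t) (prm j t'))
    _ = ∑ i : Fin 6, ∑ j : Fin 6, ∑ t : Fin n × Fin n × Fin n,
          ∑ t' : Fin n × Fin n × Fin n, phi2 μ w t t' := by
        refine Finset.sum_congr rfl fun i _ => Finset.sum_congr rfl fun j _ => ?_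
        rw [sum_prm i (fun u => ∑ t' : Fin n × Fin n × Fin n, phi2 μ w u (prm j t'))]
        exact Finset.sum_congr rfl fun u _ => sum_prm j (fun v => phi2 μ w u v)
    _ ≤ ∑ i : Fin 6, ∑ j : Fin 6, ∑ t : Fin n × Fin n × Fin n,
          ∑ z' : Fin n, Hq μ w t.1 t.2.1 t.2.2 z' := by
        refine Finset.sum_le_sum fun i _ => Finset.sum_le_sum fun j _ =>
          Finset.sum_le_sum fun t _ => key t
    _ = 36 * ∑ x : Fin n, ∑ y : Fin n, ∑ z : Fin n, ∑ z' : Fin n, Hq μ w x y z z' := by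
        have : ∑ t : Fin n × Fin n × Fin n, ∑ z' : Fin n, Hq μ w t.1 t.2.1 t.2.2 z'
            = ∑ x : Fin n, ∑ y : Fin n, ∑ z : Fin n, ∑ z' : Fin n, Hq μ w x y z z' := by
          rw [Fintype.sum_prod_type]
          exact Finset.sum_congr rfl fun x _ => Fintype.sum_prod_type _
        rw [this]
        simp [Finset.sum_const, Finset.card_univ]
        ring


-- ===================== analytic bounds =====================

def RR (x y : Fin n) : ℝ := ∑ z : Fin n, qq μ w (ee y z) * qq μ w (ee z x) * (w z)⁻¹

lemma RR_nonneg (hμn : 0 ≤ μ * n) (hw : ∀ i, 0 ≤ w i) (x y : Fin n) : 0 ≤ RR μ w x y :=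
  Finset.sum_nonneg fun z _ => mul_nonneg (mul_nonneg (qq_nonneg μ w hμn hw _)
    (qq_nonneg μ w hμn hw _)) (inv_nonneg.2 (hw z))

lemma sum_zz'_Hq (hw : ∀ i, 0 < w i) (x y : Fin n) :
    ∑ z : Fin n, ∑ z' : Fin n, Hq μ w x y z z'
      = qq μ w (ee x y) * ((w x)^2 * (w y)^2)⁻¹ * (RR μ w x y)^2 := by
  have hsq : (RR μ w x y)^2 = ∑ z : Fin n, ∑ z' : Fin n,
      (qq μ w (ee y z) * qq μ w (ee z x) * (w z)⁻¹)
        * (qq μ w (ee y z') * qq μ w (ee z' x) * (w z')⁻¹) := by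
    rw [pow_two, RR, Finset.sum_mul_sum]
  rw [hsq, Finset.mul_sum]
  refine Finset.sum_congr rfl fun z _ => ?_
  rw [Finset.mul_sum]
  refine Finset.sum_congr rfl fun z' _ => ?_
  rw [Hq]
  have hx := (hw x).ne'
  have hy := (hw y).ne'
  have hz := (hw z).ne'
  have hz' := (hw z').ne'
  field_simp

lemma qq_factor (hμn : 0 < μ * n) (hw : ∀ i, 0 < w i) (u v : Fin n) :
    qq μ w (ee u v) = (w u / (μ * n)) * min (w v) (μ * n / w u) := by
  rw [qq_ee, pIRG]
  have h1 : (w u / (μ * n)) * min (w v) (μ * n / w u)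
      = min (w u / (μ * n) * w v) (w u / (μ * n) * (μ * n / w u)) :=
    mul_min_of_nonneg _ _ (div_nonneg (hw u).le hμn.le)
  rw [h1]
  congr 1
  · field_simp
  · rw [div_mul_div_comm, mul_comm]
    exact (div_self (mul_pos hμn (hw u)).ne').symm

lemma RR_le (hμn : 0 < μ * n) (hw : ∀ i, 0 < w i) (K Mr : ℝ)
    (hS : ∀ A : ℝ, 0 ≤ A → ∑ z : Fin n, min (w z) A ≤ K * n + A * Mr)
    (x y : Fin n) :
    RR μ w x y ≤ K * (w x * w y) / (μ^2 * n) + min (w x) (w y) * Mr / (μ * n) := by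
  set m := max (w x) (w y) with hm
  have hm0 : 0 < m := lt_max_of_lt_left (hw x)
  have hA0 : 0 ≤ μ * n / m := div_nonneg hμn.le hm0.le
  have hpt : ∀ z : Fin n, qq μ w (ee y z) * qq μ w (ee z x) * (w z)⁻¹
      ≤ (w x * w y / (μ * n)^2) * min (w z) (μ * n / m) := by
    intro z
    have hqy : qq μ w (ee y z) = (w y / (μ * n)) * min (w z) (μ * n / w y) :=
      qq_factor μ w hμn hw y z
    have hqx : qq μ w (ee z x) = (w x / (μ * n)) * min (w z) (μ * n / w x) := by
      rw [ee_comm]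
      exact qq_factor μ w hμn hw x z
    set Ay := μ * n / w y with hAy
    set Ax := μ * n / w x with hAx
    have hwz := hw z
    have hinv : w z * (w z)⁻¹ = 1 := mul_inv_cancel₀ hwz.ne'
    have hmin1 : min (w z) Ay ≤ w z := min_le_left _ _
    have hmin2 : min (w z) Ax ≤ w z := min_le_left _ _
    have hmin1' : 0 ≤ min (w z) Ay := le_min hwz.le (div_nonneg hμn.le (hw y).le)
    have hmin2' : 0 ≤ min (w z) Ax := le_min hwz.le (div_nonneg hμn.le (hw x).le)
    have hcore : min (w z) Ay * min (w z) Ax * (w z)⁻¹ ≤ min (w z) (μ * n / m) := by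
      have hAm : μ * n / m = min Ax Ay := by
        rcases le_total (w x) (w y) with h | h
        · rw [hm, max_eq_right h, hAx, hAy]
          rw [min_eq_right (div_le_div_of_nonneg_left hμn.le (hw x) h)]
        · rw [hm, max_eq_left h, hAx, hAy]
          rw [min_eq_left (div_le_div_of_nonneg_left hμn.le (hw y) h)]
      have hi : 0 < (w z)⁻¹ := inv_pos.2 hwz
      have e1 : min (w z) Ay * min (w z) Ax * (w z)⁻¹ ≤ w z := by
        have hab : min (w z) Ay * min (w z) Ax ≤ w z * w z :=
          mul_le_mul hmin1 hmin2 hmin2' hwz.le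
        calc min (w z) Ay * min (w z) Ax * (w z)⁻¹ ≤ w z * w z * (w z)⁻¹ :=
              mul_le_mul_of_nonneg_right hab hi.le
          _ = w z := by field_simp
      have e2 : min (w z) Ay * min (w z) Ax * (w z)⁻¹ ≤ Ax := by
        have h3 : min (w z) Ay * min (w z) Ax * (w z)⁻¹ ≤ w z * min (w z) Ax * (w z)⁻¹ :=
          mul_le_mul_of_nonneg_right (mul_le_mul_of_nonneg_right hmin1 hmin2') hi.le
        have h4 : w z * min (w z) Ax * (w z)⁻¹ = min (w z) Ax := by
          field_simp
        calc min (w z) Ay * min (w z) Ax * (w z)⁻¹ ≤ w z * min (w z) Ax * (w z)⁻¹ := h3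
          _ = min (w z) Ax := h4
          _ ≤ Ax := min_le_right _ _
      have e3 : min (w z) Ay * min (w z) Ax * (w z)⁻¹ ≤ Ay := by
        have h3 : min (w z) Ay * min (w z) Ax * (w z)⁻¹ ≤ min (w z) Ay * w z * (w z)⁻¹ :=
          mul_le_mul_of_nonneg_right (mul_le_mul_of_nonneg_left hmin2 hmin1') hi.le
        have h4 : min (w z) Ay * w z * (w z)⁻¹ = min (w z) Ay := by
          field_simp
        calc min (w z) Ay * min (w z) Ax * (w z)⁻¹ ≤ min (w z) Ay * w z * (w z)⁻¹ := h3
          _ = min (w z) Ay := h4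
          _ ≤ Ay := min_le_right _ _
      rw [hAm]
      exact le_min e1 (le_min e2 e3)
    calc qq μ w (ee y z) * qq μ w (ee z x) * (w z)⁻¹
        = (w x * w y / (μ * n)^2) * (min (w z) Ay * min (w z) Ax * (w z)⁻¹) := by
          rw [hqy, hqx]; ring
      _ ≤ (w x * w y / (μ * n)^2) * min (w z) (μ * n / m) := by
          refine mul_le_mul_of_nonneg_left hcore ?_
          exact div_nonneg (mul_nonneg (hw x).le (hw y).le) (sq_nonneg _)
  have hsum : RR μ w x y ≤ (w x * w y / (μ * n)^2) * ∑ z : Fin n, min (w z) (μ * n / m) := by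
    rw [RR, Finset.mul_sum]
    exact Finset.sum_le_sum fun z _ => hpt z
  have hS' := hS (μ * n / m) hA0
  have hfinal : (w x * w y / (μ * n)^2) * (K * n + (μ * n / m) * Mr)
      = K * (w x * w y) / (μ^2 * n) + (w x * w y / m) * Mr / (μ * n) := by
    have hμ0 : μ ≠ 0 := fun h => by simp [h] at hμn
    have hn0 : (n:ℝ) ≠ 0 := fun h => by rw [h, mul_zero] at hμn; exact lt_irrefl 0 hμn
    field_simp
  have hminm : w x * w y / m = min (w x) (w y) := by
    rcases le_total (w x) (w y) with h | h
    · rw [hm, max_eq_right h, min_eq_left h, mul_div_assoc, div_self (hw y).ne', mul_one]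
    · rw [hm, max_eq_left h, min_eq_right h, mul_comm, mul_div_assoc, div_self (hw x).ne',
        mul_one]
  calc RR μ w x y ≤ (w x * w y / (μ * n)^2) * ∑ z : Fin n, min (w z) (μ * n / m) := hsum
    _ ≤ (w x * w y / (μ * n)^2) * (K * n + (μ * n / m) * Mr) := by
        refine mul_le_mul_of_nonneg_left hS' ?_
        exact div_nonneg (mul_nonneg (hw x).le (hw y).le) (sq_nonneg _)
    _ = K * (w x * w y) / (μ^2 * n) + min (w x) (w y) * Mr / (μ * n) := by
        rw [hfinal, hminm]

lemma sum_Hq_le (hn : 0 < n) (hμ : 0 < μ) (hw : ∀ i, 0 < w i) (K Mr : ℝ)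
    (hK : 0 ≤ K) (hMr : 0 ≤ Mr)
    (hS : ∀ A : ℝ, 0 ≤ A → ∑ z : Fin n, min (w z) A ≤ K * n + A * Mr)
    (hM2 : Mr^2 ≤ n) :
    ∑ x : Fin n, ∑ y : Fin n, ∑ z : Fin n, ∑ z' : Fin n, Hq μ w x y z z'
      ≤ 2 * K^2 / μ^4 + 2 / μ^3 := by
  have hn' : (0:ℝ) < n := by exact_mod_cast hn
  have hμn : 0 < μ * n := mul_pos hμ hn'
  have hw0 : ∀ i, 0 ≤ w i := fun i => (hw i).le
  have hpt : ∀ x y : Fin n, ∑ z : Fin n, ∑ z' : Fin n, Hq μ w x y z z'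
      ≤ 2 * K^2 / (μ^4 * n^2) + 2 * Mr^2 / (μ^3 * n^3) := by
    intro x y
    rw [sum_zz'_Hq μ w hw x y]
    set A := K * (w x * w y) / (μ^2 * n) with hA
    set B := min (w x) (w y) * Mr / (μ * n) with hB
    have hA0 : 0 ≤ A := by
      rw [hA]
      exact div_nonneg (mul_nonneg hK (mul_nonneg (hw x).le (hw y).le)) (by positivity)
    have hB0 : 0 ≤ B := by
      rw [hB]
      exact div_nonneg (mul_nonneg (le_min (hw x).le (hw y).le) hMr) hμn.le
    have hR0 := RR_nonneg μ w hμn.le hw0 x y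
    have hRle : RR μ w x y ≤ A + B := by rw [hA, hB]; exact RR_le μ w hμn hw K Mr hS x y
    have hR2 : (RR μ w x y)^2 ≤ 2 * A^2 + 2 * B^2 := by
      have := pow_le_pow_left₀ hR0 hRle 2
      nlinarith [sq_nonneg (A - B)]
    have hq1 : qq μ w (ee x y) ≤ 1 := qq_le_one μ w _
    have hq0 : 0 ≤ qq μ w (ee x y) := qq_nonneg μ w hμn.le hw0 _
    have hqw : qq μ w (ee x y) ≤ w x * w y / (μ * n) := qq_le_ww μ w hμn x y
    have hwx := hw x; have hwy := hw y
    have hinv0 : (0:ℝ) ≤ ((w x)^2 * (w y)^2)⁻¹ := by positivity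
    have step : qq μ w (ee x y) * ((w x)^2 * (w y)^2)⁻¹ * (RR μ w x y)^2
        ≤ qq μ w (ee x y) * ((w x)^2 * (w y)^2)⁻¹ * (2 * A^2 + 2 * B^2) := by
      refine mul_le_mul_of_nonneg_left hR2 ?_
      exact mul_nonneg hq0 hinv0
    have t1 : qq μ w (ee x y) * ((w x)^2 * (w y)^2)⁻¹ * (2 * A^2)
        ≤ 2 * K^2 / (μ^4 * n^2) := by
      have : qq μ w (ee x y) * ((w x)^2 * (w y)^2)⁻¹ * (2 * A^2)
          ≤ 1 * ((w x)^2 * (w y)^2)⁻¹ * (2 * A^2) := by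
        refine mul_le_mul_of_nonneg_right (mul_le_mul_of_nonneg_right hq1 hinv0) ?_
        positivity
      refine this.trans (le_of_eq ?_)
      rw [hA]
      field_simp
    have t2 : qq μ w (ee x y) * ((w x)^2 * (w y)^2)⁻¹ * (2 * B^2)
        ≤ 2 * Mr^2 / (μ^3 * n^3) := by
      have hmin2 : (min (w x) (w y))^2 ≤ w x * w y := by
        rcases le_total (w x) (w y) with h | h
        · rw [min_eq_left h]; nlinarith
        · rw [min_eq_right h]; nlinarith
      have hq' : qq μ w (ee x y) * (min (w x) (w y))^2 ≤ (w x * w y / (μ * n)) * (w x * w y) := by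
        have := mul_le_mul hqw hmin2 (sq_nonneg _) (div_nonneg (mul_nonneg hwx.le hwy.le) hμn.le)
        exact this
      have expand : qq μ w (ee x y) * ((w x)^2 * (w y)^2)⁻¹ * (2 * B^2)
          = (qq μ w (ee x y) * (min (w x) (w y))^2) * (2 * Mr^2 * ((w x)^2 * (w y)^2)⁻¹
              * ((μ * n)^2)⁻¹) := by
        rw [hB]
        field_simp
      have final : ((w x * w y / (μ * n)) * (w x * w y)) * (2 * Mr^2 * ((w x)^2 * (w y)^2)⁻¹
          * ((μ * n)^2)⁻¹) = 2 * Mr^2 / (μ^3 * n^3) := by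
        field_simp
      rw [expand, ← final]
      refine mul_le_mul_of_nonneg_right hq' ?_
      positivity
    calc qq μ w (ee x y) * ((w x)^2 * (w y)^2)⁻¹ * (RR μ w x y)^2
        ≤ qq μ w (ee x y) * ((w x)^2 * (w y)^2)⁻¹ * (2 * A^2 + 2 * B^2) := step
      _ = qq μ w (ee x y) * ((w x)^2 * (w y)^2)⁻¹ * (2 * A^2)
            + qq μ w (ee x y) * ((w x)^2 * (w y)^2)⁻¹ * (2 * B^2) := by ring
      _ ≤ 2 * K^2 / (μ^4 * n^2) + 2 * Mr^2 / (μ^3 * n^3) := add_le_add t1 t2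
  calc ∑ x : Fin n, ∑ y : Fin n, ∑ z : Fin n, ∑ z' : Fin n, Hq μ w x y z z'
      ≤ ∑ x : Fin n, ∑ y : Fin n, (2 * K^2 / (μ^4 * n^2) + 2 * Mr^2 / (μ^3 * n^3)) :=
        Finset.sum_le_sum fun x _ => Finset.sum_le_sum fun y _ => hpt x y
    _ = n^2 * (2 * K^2 / (μ^4 * n^2) + 2 * Mr^2 / (μ^3 * n^3)) := by
        simp only [Finset.sum_const, Finset.card_univ, Fintype.card_fin, nsmul_eq_mul]
        push_cast
        ring
    _ ≤ 2 * K^2 / μ^4 + 2 / μ^3 := by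
        have h1 : (n:ℝ)^2 * (2 * K^2 / (μ^4 * n^2)) = 2 * K^2 / μ^4 := by
          field_simp
        have h2 : (n:ℝ)^2 * (2 * Mr^2 / (μ^3 * n^3)) = 2 * Mr^2 / (μ^3 * n) := by
          rw [eq_div_iff (by positivity)]
          field_simp
        rw [mul_add, h1, h2]
        refine add_le_add_right ?_ _
        rw [div_le_div_iff₀ (by positivity) (by positivity)]
        nlinarith [mul_le_mul_of_nonneg_left hM2 (le_of_lt (pow_pos hμ 3))]

lemma variance_le_CORE (hn : 0 < n) (hμ : 0 < μ) (hw : ∀ i, 0 < w i) (K Mr : ℝ)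
    (hK : 0 ≤ K) (hMr : 0 ≤ Mr)
    (hS : ∀ A : ℝ, 0 ≤ A → ∑ z : Fin n, min (w z) A ≤ K * n + A * Mr)
    (hM2 : Mr^2 ≤ n) :
    variance (WH0 n μ w) (H0Measure n) ≤ 36/μ^3 + 36 * (2 * K^2/μ^4 + 2/μ^3) := by
  have hn' : (0:ℝ) < n := by exact_mod_cast hn
  have hμn : 0 < μ * n := mul_pos hμ hn'
  have hw0 : ∀ i, 0 ≤ w i := fun i => (hw i).le
  rw [variance_W μ w hμn.le hw0]
  calc ∑ t : Fin n × Fin n × Fin n, ∑ t' : Fin n × Fin n × Fin n, kk w t * kk w t' *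
        (PP μ w (sE t ∪ sE t') - PP μ w (sE t) * PP μ w (sE t'))
      ≤ ∑ t : Fin n × Fin n × Fin n, ∑ t' : Fin n × Fin n × Fin n,
          (GG3 μ t t' + GG2 μ w t t') :=
        Finset.sum_le_sum fun t _ => Finset.sum_le_sum fun t' _ => master μ w hμn hw t t'
    _ = (∑ t : Fin n × Fin n × Fin n, ∑ t' : Fin n × Fin n × Fin n, GG3 μ t t')
        + ∑ t : Fin n × Fin n × Fin n, ∑ t' : Fin n × Fin n × Fin n, GG2 μ w t t' := by
        rw [← Finset.sum_add_distrib]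
        exact Finset.sum_congr rfl fun t _ => Finset.sum_add_distrib
    _ ≤ 36/μ^3 + 36 * (2 * K^2/μ^4 + 2/μ^3) := by
        refine add_le_add (le_of_eq (sum_GG3 μ hn hμ)) ?_
        calc ∑ t : Fin n × Fin n × Fin n, ∑ t' : Fin n × Fin n × Fin n, GG2 μ w t t'
            ≤ 36 * ∑ x : Fin n, ∑ y : Fin n, ∑ z : Fin n, ∑ z' : Fin n, Hq μ w x y z z' :=
              sum_GG2 μ w hμn.le hw0
          _ ≤ 36 * (2 * K^2/μ^4 + 2/μ^3) := by
              refine mul_le_mul_of_nonneg_left ?_ (by norm_num)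
              exact sum_Hq_le μ w hn hμ hw K Mr hK hMr hS hM2

end Core

-- ===================== tail estimates =====================

lemma dyadic_pt (w0 : ℝ) (hw0 : 0 < w0) : ∀ (B : ℕ) (m : ℝ), w0 ≤ m → m ≤ 2^B * w0 →
    m ≤ w0 + ∑ k ∈ Finset.range B, (if 2^k * w0 < m then 2^k * w0 else 0) := by
  intro B
  induction B with
  | zero =>
    intro m h1 h2
    simp only [Finset.range_zero, Finset.sum_empty, add_zero]
    calc m ≤ 2^0 * w0 := h2
      _ = w0 := by norm_num
  | succ B ih =>
    intro m h1 h2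
    have hterm : ∀ k, (0:ℝ) ≤ (if 2^k * w0 < m then 2^k * w0 else 0) := by
      intro k; split
      · positivity
      · exact le_refl 0
    by_cases hc : m ≤ 2 * w0
    · have h0 : (if 2^0 * w0 < m then 2^0 * w0 else 0) ≤ ∑ k ∈ Finset.range (B+1),
          (if 2^k * w0 < m then 2^k * w0 else 0) :=
        Finset.single_le_sum (fun k _ => hterm k) (Finset.mem_range.2 (Nat.succ_pos B))
      by_cases hm : w0 < m
      · have : (if 2^0 * w0 < m then 2^0 * w0 else 0) = w0 := by
          rw [if_pos (by simpa using hm)]; norm_num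
        linarith [h0, this ▸ h0]
      · push_neg at hm
        have hsum : 0 ≤ ∑ k ∈ Finset.range (B+1), (if 2^k * w0 < m then 2^k * w0 else 0) :=
          Finset.sum_nonneg fun k _ => hterm k
        linarith
    · push_neg at hc
      have hm2 : w0 ≤ m / 2 := by linarith
      have hm2' : m / 2 ≤ 2^B * w0 := by
        rw [pow_succ] at h2
        linarith
      have := ih (m / 2) hm2 hm2'
      have hcond : ∀ k, ((2:ℝ)^k * w0 < m / 2) ↔ (2^(k+1) * w0 < m) := by
        intro k
        rw [pow_succ]
        constructor <;> intro h <;> linarith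
      have hsum2 : ∑ k ∈ Finset.range B, (if 2^k * w0 < m / 2 then 2^k * w0 else 0)
          = ∑ k ∈ Finset.range B, (1/2) * (if 2^(k+1) * w0 < m then 2^(k+1) * w0 else 0) := by
        refine Finset.sum_congr rfl fun k _ => ?_
        rw [if_congr (hcond k) rfl rfl]
        split
        · rw [pow_succ]; ring
        · ring
      have hsplit : ∑ k ∈ Finset.range (B+1), (if 2^k * w0 < m then 2^k * w0 else 0)
          = (∑ k ∈ Finset.range B, (if 2^(k+1) * w0 < m then 2^(k+1) * w0 else 0))
            + (if 2^0 * w0 < m then 2^0 * w0 else 0) :=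
        Finset.sum_range_succ' _ B
      have h00 : (if 2^0 * w0 < m then 2^0 * w0 else 0) = w0 := by
        rw [if_pos (by norm_num; linarith)]
        norm_num
      rw [hsplit, h00]
      rw [hsum2, ← Finset.mul_sum] at this
      linarith

lemma sum_min_le_K {n : ℕ} (w : Fin n → ℝ) (w0 C τ t : ℝ) (hw0 : 0 < w0) (hC : 0 < C)
    (hτ : 2 < τ) (hwlb : ∀ i, w0 ≤ w i) (ht : w0 ≤ t)
    (hcard : ∀ x : ℝ, w0 ≤ x → x < t →
      ((univ.filter fun i : Fin n => x < w i).card : ℝ) ≤ 2 * C * n * x ^ (1 - τ)) :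
    ∑ i : Fin n, min (w i) t
      ≤ (w0 + 2 * C * w0 ^ (2 - τ) / (1 - (2:ℝ) ^ (2 - τ))) * n := by
  set r : ℝ := (2:ℝ) ^ (2 - τ) with hr
  have hr0 : 0 < r := Real.rpow_pos_of_pos two_pos _
  have hr1 : r < 1 := Real.rpow_lt_one_of_one_lt_of_neg one_lt_two (by linarith)
  obtain ⟨B, hB⟩ := pow_unbounded_of_one_lt (t / w0) one_lt_two
  have hB' : t ≤ 2^B * w0 := by
    rw [div_lt_iff₀ hw0] at hB
    linarith
  have hpt : ∀ i : Fin n, min (w i) t ≤ w0 + ∑ k ∈ Finset.range B,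
      (if 2^k * w0 < t ∧ 2^k * w0 < w i then 2^k * w0 else 0) := by
    intro i
    have h1 : w0 ≤ min (w i) t := le_min (hwlb i) ht
    have h2 : min (w i) t ≤ 2^B * w0 := le_trans (min_le_right _ _) hB'
    refine (dyadic_pt w0 hw0 B _ h1 h2).trans ?_
    refine add_le_add_right (Finset.sum_le_sum fun k _ => ?_) w0
    exact le_of_eq (if_congr (by rw [lt_min_iff]; exact and_comm) rfl rfl)
  have hsum : ∑ i : Fin n, min (w i) t ≤ n * w0 + ∑ k ∈ Finset.range B,
      (if 2^k * w0 < t then 2^k * w0 * ((univ.filter fun i : Fin n => 2^k * w0 < w i).card : ℝ)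
        else 0) := by
    calc ∑ i : Fin n, min (w i) t
        ≤ ∑ i : Fin n, (w0 + ∑ k ∈ Finset.range B,
            (if 2^k * w0 < t ∧ 2^k * w0 < w i then 2^k * w0 else 0)) :=
          Finset.sum_le_sum fun i _ => hpt i
      _ = n * w0 + ∑ i : Fin n, ∑ k ∈ Finset.range B,
            (if 2^k * w0 < t ∧ 2^k * w0 < w i then 2^k * w0 else 0) := by
          rw [Finset.sum_add_distrib, Finset.sum_const, Finset.card_univ, Fintype.card_fin,
            nsmul_eq_mul]
      _ = n * w0 + ∑ k ∈ Finset.range B, ∑ i : Fin n,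
            (if 2^k * w0 < t ∧ 2^k * w0 < w i then 2^k * w0 else 0) := by
          rw [Finset.sum_comm]
      _ = n * w0 + ∑ k ∈ Finset.range B,
            (if 2^k * w0 < t then 2^k * w0
              * ((univ.filter fun i : Fin n => 2^k * w0 < w i).card : ℝ) else 0) := by
          congr 1
          refine Finset.sum_congr rfl fun k _ => ?_
          by_cases hk : (2:ℝ)^k * w0 < t
          · rw [if_pos hk]
            simp only [hk, true_and]
            rw [Finset.sum_ite, Finset.sum_const, Finset.sum_const_zero, add_zero,
              nsmul_eq_mul, mul_comm]
          · rw [if_neg hk]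
            simp only [hk, false_and, if_false, Finset.sum_const_zero]
  have hgeom : ∑ k ∈ Finset.range B, r^k ≤ 1 / (1 - r) := by
    rw [geom_sum_eq hr1.ne B]
    rw [show (r^B - 1)/(r - 1) = (1 - r^B)/(1 - r) by
      rw [← neg_sub (1:ℝ) (r^B), ← neg_sub (1:ℝ) r, neg_div_neg_eq]]
    rw [div_le_div_iff₀ (by linarith) (by linarith)]
    have : (0:ℝ) ≤ r^B := le_of_lt (pow_pos hr0 B)
    nlinarith
  have hterm : ∀ k ∈ Finset.range B,
      (if 2^k * w0 < t then 2^k * w0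
        * ((univ.filter fun i : Fin n => 2^k * w0 < w i).card : ℝ) else 0)
      ≤ 2 * C * w0 ^ (2 - τ) * n * r^k := by
    intro k _
    have hx0 : (0:ℝ) < 2^k * w0 := by positivity
    have hxw0 : w0 ≤ 2^k * w0 := by
      have h2k : (1:ℝ) ≤ 2 ^ k := one_le_pow₀ one_le_two
      nlinarith
    by_cases hk : (2:ℝ)^k * w0 < t
    · rw [if_pos hk]
      have hc := hcard (2^k * w0) hxw0 hk
      have hrw : (2^k * w0) * (2 * C * n * (2^k * w0) ^ (1 - τ))
          = 2 * C * w0 ^ (2 - τ) * n * r^k := by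
        have e1 : ((2:ℝ)^k * w0) ^ (1 - τ) = ((2:ℝ)^k) ^ (1 - τ) * w0 ^ (1 - τ) :=
          Real.mul_rpow (by positivity) hw0.le
        have e2 : ((2:ℝ)^k) ^ ((1:ℝ) - τ) = ((2:ℝ) ^ ((1:ℝ) - τ))^k := by
          rw [← Real.rpow_natCast (2:ℝ) k, ← Real.rpow_mul (by norm_num), mul_comm,
            Real.rpow_mul (by norm_num), Real.rpow_natCast]
        have e3 : (2:ℝ)^k * ((2:ℝ)^((1:ℝ)-τ))^k = r^k := by
          rw [← mul_pow]
          congr 1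
          rw [hr, show (2:ℝ) - τ = 1 + (1 - τ) by ring, Real.rpow_add two_pos, Real.rpow_one]
        have e4 : w0 * w0^((1:ℝ)-τ) = w0^((2:ℝ)-τ) := by
          rw [show (2:ℝ) - τ = 1 + (1 - τ) by ring, Real.rpow_add hw0, Real.rpow_one]
        rw [e1, e2, ← e3, ← e4]
        ring
      calc 2^k * w0 * ((univ.filter fun i : Fin n => 2^k * w0 < w i).card : ℝ)
          ≤ (2^k * w0) * (2 * C * n * (2^k * w0) ^ (1 - τ)) := by
            refine mul_le_mul_of_nonneg_left hc hx0.le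
        _ = 2 * C * w0 ^ (2 - τ) * n * r^k := hrw
    · rw [if_neg hk]
      have : (0:ℝ) ≤ 2 * C * w0 ^ (2 - τ) * n * r^k := by positivity
      exact this
  calc ∑ i : Fin n, min (w i) t
      ≤ n * w0 + ∑ k ∈ Finset.range B,
          (if 2^k * w0 < t then 2^k * w0
            * ((univ.filter fun i : Fin n => 2^k * w0 < w i).card : ℝ) else 0) := hsum
    _ ≤ n * w0 + ∑ k ∈ Finset.range B, 2 * C * w0 ^ (2 - τ) * n * r^k :=
        add_le_add_right (Finset.sum_le_sum hterm) _
    _ = n * w0 + 2 * C * w0 ^ (2 - τ) * n * ∑ k ∈ Finset.range B, r^k := by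
        rw [Finset.mul_sum]
    _ ≤ n * w0 + 2 * C * w0 ^ (2 - τ) * n * (1 / (1 - r)) := by
        refine add_le_add_right (mul_le_mul_of_nonneg_left hgeom (by positivity)) _
    _ = (w0 + 2 * C * w0 ^ (2 - τ) / (1 - r)) * n := by ring

-- ===================== main theorem =====================

/-- Proposition 5.3 (variance): under the null model, `Var₀(W) = O(1)` as `n → ∞`. -/
theorem variance_weighted_triangles_H0
    (τ C w0 : ℝ) (hτ1 : 2 < τ) (hτ2 : τ < 3) (hC : 0 < C) (hw0 : 0 < w0)
    (hCw : C = w0 ^ (τ - 1))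
    (w : (n : ℕ) → Fin n → ℝ) (hww0 : ∀ n (i : Fin n), w0 ≤ w n i)
    (hA1 : Assumption1 τ C w0 w)
    :
    (fun n : ℕ => variance (WH0 n (muPar τ C w0) (w n)) (H0Measure n))
      =O[atTop] (fun _ : ℕ => (1 : ℝ)) := by
  classical
  obtain ⟨N1, hN1⟩ := hA1 1 one_pos
  have hτ1' : (0:ℝ) < τ - 1 := by linarith
  have hμ : 0 < muPar τ C w0 := by
    rw [muPar]
    exact mul_pos (div_pos (mul_pos hC (by linarith)) (by linarith))
      (Real.rpow_pos_of_pos hw0 _)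
  set μ : ℝ := muPar τ C w0 with hμdef
  set e : ℝ := 3 / (4 * (τ - 1)) with he
  set d : ℝ := 1 / (4 * (τ - 1)) with hd
  have he0 : 0 < e := by rw [he]; positivity
  have hd0 : 0 < d := by rw [hd]; positivity
  set r : ℝ := (2:ℝ) ^ ((2:ℝ) - τ) with hr
  have hr0 : 0 < r := Real.rpow_pos_of_pos two_pos _
  have hr1 : r < 1 := Real.rpow_lt_one_of_one_lt_of_neg one_lt_two (by linarith)
  set K : ℝ := w0 + 2 * C * w0 ^ ((2:ℝ) - τ) / (1 - r) with hKdef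
  have hw2τ : 0 < w0 ^ ((2:ℝ) - τ) := Real.rpow_pos_of_pos hw0 _
  have h1r : 0 < 1 - r := by linarith
  have hK0 : 0 ≤ K := by
    rw [hKdef]
    have : 0 ≤ 2 * C * w0 ^ ((2:ℝ) - τ) / (1 - r) := by positivity
    linarith
  have E2 : ∀ᶠ n : ℕ in atTop, w0 ≤ (n:ℝ) ^ e :=
    ((tendsto_rpow_atTop he0).comp tendsto_natCast_atTop_atTop).eventually_ge_atTop w0
  have E4 : ∀ᶠ n : ℕ in atTop, 4 * C^2 ≤ (n:ℝ) ^ ((1:ℝ)/2) :=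
    ((tendsto_rpow_atTop (by norm_num)).comp tendsto_natCast_atTop_atTop).eventually_ge_atTop _
  have Elog : ∀ᶠ n : ℕ in atTop, Real.log n ≤ (n:ℝ) ^ d := by
    have h := (isLittleO_log_rpow_atTop hd0).def one_pos
    have h2 := tendsto_natCast_atTop_atTop (R := ℝ) |>.eventually h
    filter_upwards [h2, eventually_ge_atTop 1] with n hn hn1
    have hn' : (0:ℝ) ≤ (n:ℝ) := Nat.cast_nonneg n
    rw [Real.norm_eq_abs, Real.norm_eq_abs, one_mul] at hn
    calc Real.log n ≤ |Real.log n| := le_abs_self _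
      _ ≤ |(n:ℝ) ^ d| := hn
      _ = (n:ℝ) ^ d := abs_of_nonneg (Real.rpow_nonneg hn' d)
  rw [Asymptotics.isBigO_iff]
  refine ⟨36/μ^3 + 36 * (2 * K^2/μ^4 + 2/μ^3), ?_⟩
  filter_upwards [E2, E4, Elog, eventually_ge_atTop N1, eventually_ge_atTop 2]
    with n h2 h4 hlog hN1n hn2
  set t : ℝ := (n:ℝ) ^ e with ht
  have hn0 : 0 < n := lt_of_lt_of_le two_pos hn2
  have hn' : (0:ℝ) < n := by exact_mod_cast hn0
  have hn1 : (1:ℝ) < n := by exact_mod_cast lt_of_lt_of_le one_lt_two hn2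
  have hlogpos : 0 < Real.log n := Real.log_pos hn1
  have hτne : τ - 1 ≠ 0 := ne_of_gt hτ1'
  have hed : e + d = 1 / (τ - 1) := by
    rw [he, hd, ← add_div, div_eq_div_iff (by positivity) hτne]
    ring
  have hxn : t ≤ (n:ℝ) ^ ((1:ℝ)/(τ - 1)) / Real.log n := by
    rw [le_div_iff₀ hlogpos]
    calc t * Real.log n ≤ t * (n:ℝ) ^ d := by
          refine mul_le_mul_of_nonneg_left hlog ?_
          exact Real.rpow_nonneg hn'.le e
      _ = (n:ℝ) ^ (e + d) := by rw [ht, ← Real.rpow_add hn']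
      _ = (n:ℝ) ^ ((1:ℝ)/(τ - 1)) := by rw [hed]
  have hcard : ∀ x : ℝ, w0 ≤ x → x ≤ (n:ℝ) ^ ((1:ℝ)/(τ - 1)) / Real.log n →
      ((univ.filter fun i : Fin n => x < w n i).card : ℝ) ≤ 2 * C * n * x ^ (1 - τ) := by
    intro x hx1 hx2
    have h := hN1 n hN1n x hx1 hx2
    have habs := (abs_le.1 h).2
    have hup : ((univ.filter fun i : Fin n => x < w n i).card : ℝ) / n
        ≤ 2 * (C * x ^ (1 - τ)) := by linarith
    calc ((univ.filter fun i : Fin n => x < w n i).card : ℝ)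
        = ((univ.filter fun i : Fin n => x < w n i).card : ℝ) / n * n := by
          field_simp
      _ ≤ 2 * (C * x ^ (1 - τ)) * n := mul_le_mul_of_nonneg_right hup hn'.le
      _ = 2 * C * n * x ^ (1 - τ) := by ring
  set Mr : ℝ := ((univ.filter fun i : Fin n => t < w n i).card : ℝ) with hMr
  have hMr0 : 0 ≤ Mr := Nat.cast_nonneg _
  have ht1 : t ^ ((1:ℝ) - τ) = (n:ℝ) ^ (e * (1 - τ)) := by
    rw [ht, ← Real.rpow_mul hn'.le]
  have he1τ : e * (1 - τ) = -(3:ℝ)/4 := by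
    rw [he]
    field_simp
    ring
  have hMrle : Mr ≤ 2 * C * (n:ℝ) ^ ((1:ℝ)/4) := by
    have hc := hcard t h2 hxn
    have hnn : (n:ℝ) * (n:ℝ) ^ (-(3:ℝ)/4) = (n:ℝ) ^ ((1:ℝ)/4) := by
      nth_rewrite 1 [← Real.rpow_one (n:ℝ)]
      rw [← Real.rpow_add hn']
      norm_num
    calc Mr ≤ 2 * C * n * t ^ (1 - τ) := hc
      _ = 2 * C * ((n:ℝ) * (n:ℝ) ^ (-(3:ℝ)/4)) := by rw [ht1, he1τ]; ring
      _ = 2 * C * (n:ℝ) ^ ((1:ℝ)/4) := by rw [hnn]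
  have hM2 : Mr^2 ≤ n := by
    have h5 : Mr^2 ≤ (2 * C * (n:ℝ) ^ ((1:ℝ)/4))^2 := pow_le_pow_left₀ hMr0 hMrle 2
    have h6 : (2 * C * (n:ℝ) ^ ((1:ℝ)/4))^2 = 4 * C^2 * (n:ℝ) ^ ((1:ℝ)/2) := by
      rw [mul_pow, mul_pow, ← Real.rpow_natCast ((n:ℝ) ^ ((1:ℝ)/4)) 2,
        ← Real.rpow_mul hn'.le]
      norm_num
    have h7 : 4 * C^2 * (n:ℝ) ^ ((1:ℝ)/2) ≤ (n:ℝ) ^ ((1:ℝ)/2) * (n:ℝ) ^ ((1:ℝ)/2) :=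
      mul_le_mul_of_nonneg_right h4 (Real.rpow_nonneg hn'.le _)
    have h8 : (n:ℝ) ^ ((1:ℝ)/2) * (n:ℝ) ^ ((1:ℝ)/2) = n := by
      rw [← Real.rpow_add hn']
      norm_num
    linarith
  have hSmin : ∑ i : Fin n, min (w n i) t ≤ K * n := by
    have := sum_min_le_K (w n) w0 C τ t hw0 hC hτ1 (hww0 n) h2
      (fun x hx1 hx2 => hcard x hx1 (le_trans hx2.le hxn))
    rw [hKdef]
    exact this
  have hS : ∀ A : ℝ, 0 ≤ A → ∑ z : Fin n, min (w n z) A ≤ K * n + A * Mr := by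
    intro A hA
    have ht0 : 0 ≤ t := le_trans hw0.le h2
    have hpt : ∀ z : Fin n, min (w n z) A ≤ min (w n z) t + (if t < w n z then A else 0) := by
      intro z
      by_cases hz : t < w n z
      · rw [if_pos hz, min_eq_right hz.le]
        have : min (w n z) A ≤ A := min_le_right _ _
        linarith
      · push_neg at hz
        rw [if_neg (not_lt.2 hz), add_zero, min_eq_left hz]
        exact min_le_left _ _
    have hsum2 : ∑ z : Fin n, (if t < w n z then A else 0) = A * Mr := by
      rw [Finset.sum_ite, Finset.sum_const, Finset.sum_const_zero, add_zero, nsmul_eq_mul,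
        hMr, mul_comm]
    calc ∑ z : Fin n, min (w n z) A
        ≤ ∑ z : Fin n, (min (w n z) t + (if t < w n z then A else 0)) :=
          Finset.sum_le_sum fun z _ => hpt z
      _ = (∑ z : Fin n, min (w n z) t) + ∑ z : Fin n, (if t < w n z then A else 0) :=
          Finset.sum_add_distrib
      _ ≤ K * n + A * Mr := add_le_add hSmin (le_of_eq hsum2)
  have hwpos : ∀ i, 0 < w n i := fun i => lt_of_lt_of_le hw0 (hww0 n i)
  have hvar := variance_le_CORE (μ := μ) (w := w n) hn0 hμ hwpos K Mr hK0 hMr0 hS hM2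
  rw [Real.norm_eq_abs, abs_of_nonneg (variance_nonneg _ _), norm_one, mul_one]
  exact hvar
end
end

section
/- Let d ≥ 1, k ≥ 1, μ > 0, w_0 > 0, and let w_a, w_b, w_c ≥ w_0 be weights. For positions x_a, x_b, x_c sampled independently and uniformly on the torus 𝕋^d = [0,1]^d with torus norm ‖·‖, the probability that all three events ‖x_a - x_b‖^d ≤ w_a w_b/(μ k), ‖x_b - x_c‖^d ≤ w_b w_c/(μ k), and ‖x_a - x_c‖^d ≤ w_a w_c/(μ k) hold simultaneously is at least (w_0²/(μ k))², provided w_0²/(μ k 2^d) ≤ 2^{-d} (so that the relevant cubes fit inside the torus). -/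
open MeasureTheory ProbabilityTheory Filter Finset Asymptotics
open scoped Topology ENNReal NNReal Classical

noncomputable section

/-- The torus distance on `[0,1]^d`:
`‖x - y‖ = sup_i min (|x i - y i|) (1 - |x i - y i|)`. -/
def torusDist (d : ℕ) (x y : Fin d → ℝ) : ℝ :=
  ⨆ i : Fin d, min |x i - y i| (1 - |x i - y i|)

/-- The uniform probability measure on the cube `[0,1]^d`. -/
def unifCube (d : ℕ) : Measure (Fin d → ℝ) := volume.restrict (Set.Icc 0 1)

/-- 1-d torus triangle inequality. -/
lemma tri1d {a b c r : ℝ} (ha0 : 0 ≤ a) (ha1 : a ≤ 1) (hb0 : 0 ≤ b) (hb1 : b ≤ 1)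
    (hc0 : 0 ≤ c) (hc1 : c ≤ 1) (hr : r ≤ 1/2)
    (h1 : min |a - b| (1 - |a - b|) ≤ r) (h2 : min |b - c| (1 - |b - c|) ≤ r) :
    min |a - c| (1 - |a - c|) ≤ 2*r := by
  rw [min_le_iff] at h1 h2 ⊢
  rcases h1 with h1 | h1 <;> rcases h2 with h2 | h2 <;>
    rcases abs_cases (a - b) with ⟨e1, f1⟩ | ⟨e1, f1⟩ <;>
    rcases abs_cases (b - c) with ⟨e2, f2⟩ | ⟨e2, f2⟩ <;>
    rcases abs_cases (a - c) with ⟨e3, f3⟩ | ⟨e3, f3⟩ <;>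
    rw [e1] at h1 <;> rw [e2] at h2 <;> rw [e3] <;>
    first
      | (left; linarith)
      | (right; linarith)

/-- Measurability of torus-ball-type sets defined coordinatewise. -/
lemma measSetPair {d : ℕ} {β : Type*} [MeasurableSpace β] (f g : β → Fin d → ℝ)
    (hf : ∀ i, Measurable fun p => f p i) (hg : ∀ i, Measurable fun p => g p i) (r : ℝ) :
    MeasurableSet {p : β | ∀ i, min |f p i - g p i| (1 - |f p i - g p i|) ≤ r} := by
  have : {p : β | ∀ i, min |f p i - g p i| (1 - |f p i - g p i|) ≤ r} =
      ⋂ i, {p : β | min |f p i - g p i| (1 - |f p i - g p i|) ≤ r} := by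
    ext p; simp
  rw [this]
  refine MeasurableSet.iInter fun i => ?_
  have hm : Measurable fun p : β => min |f p i - g p i| (1 - |f p i - g p i|) := by
    have h1 : Measurable fun p : β => |f p i - g p i| := ((hf i).sub (hg i)).abs
    exact h1.min (measurable_const.sub h1)
  exact measurableSet_le hm measurable_const

lemma measSet1 {d : ℕ} (y : Fin d → ℝ) (r : ℝ) :
    MeasurableSet {x : Fin d → ℝ | ∀ i, min |y i - x i| (1 - |y i - x i|) ≤ r} :=
  measSetPair (fun _ => y) (fun x => x) (fun _ => measurable_const)
    (fun i => measurable_pi_apply i) r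

/-- 1-d ball lower bound. -/
lemma ball1d (b r : ℝ) (hb0 : 0 ≤ b) (hb1 : b ≤ 1) (hr0 : 0 ≤ r) (hr : r ≤ 1/2) :
    ENNReal.ofReal (2*r) ≤ volume ({t : ℝ | min |b - t| (1 - |b - t|) ≤ r} ∩ Set.Icc 0 1) := by
  rcases lt_or_ge b r with h1 | h1
  · have hsub : Set.Ico 0 (b+r) ∪ Set.Icc (b+1-r) 1 ⊆
        {t : ℝ | min |b - t| (1 - |b - t|) ≤ r} ∩ Set.Icc 0 1 := by
      rintro t (⟨h0, h2⟩ | ⟨h0, h2⟩)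
      · have hab : |b - t| ≤ r := abs_le.2 ⟨by linarith, by linarith⟩
        exact ⟨min_le_of_left_le hab, h0, by linarith⟩
      · have hab : 1 - r ≤ |b - t| := le_abs.2 (Or.inr (by linarith))
        have h5 : 1 - |b - t| ≤ r := by linarith
        exact ⟨min_le_of_right_le h5, by linarith, h2⟩
    refine le_trans ?_ (measure_mono hsub)
    rw [measure_union (Set.disjoint_left.mpr (fun t ht ht' => by
        simp only [Set.mem_Ico, Set.mem_Icc] at ht ht'; linarith [ht.2, ht'.1]))
      measurableSet_Icc]
    rw [Real.volume_Ico, Real.volume_Icc, ← ENNReal.ofReal_add (by linarith) (by linarith)]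
    exact ENNReal.ofReal_le_ofReal (by linarith)
  · rcases lt_or_ge (1 - r) b with h2 | h2
    · have hsub : Set.Ico 0 (b+r-1) ∪ Set.Icc (b-r) 1 ⊆
          {t : ℝ | min |b - t| (1 - |b - t|) ≤ r} ∩ Set.Icc 0 1 := by
        rintro t (⟨h0, h3⟩ | ⟨h0, h3⟩)
        · have hab : 1 - r ≤ |b - t| := le_abs.2 (Or.inl (by linarith))
          have h5 : 1 - |b - t| ≤ r := by linarith
          exact ⟨min_le_of_right_le h5, h0, by linarith⟩
        · have hab : |b - t| ≤ r := abs_le.2 ⟨by linarith, by linarith⟩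
          exact ⟨min_le_of_left_le hab, by linarith, h3⟩
      refine le_trans ?_ (measure_mono hsub)
      rw [measure_union (Set.disjoint_left.mpr (fun t ht ht' => by
          simp only [Set.mem_Ico, Set.mem_Icc] at ht ht'; linarith [ht.2, ht'.1]))
        measurableSet_Icc]
      rw [Real.volume_Ico, Real.volume_Icc, ← ENNReal.ofReal_add (by linarith) (by linarith)]
      exact ENNReal.ofReal_le_ofReal (by linarith)
    · have hsub : Set.Icc (b-r) (b+r) ⊆
          {t : ℝ | min |b - t| (1 - |b - t|) ≤ r} ∩ Set.Icc 0 1 := by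
        rintro t ⟨h0, h3⟩
        have hab : |b - t| ≤ r := abs_le.2 ⟨by linarith, by linarith⟩
        exact ⟨min_le_of_left_le hab, by linarith, by linarith⟩
      refine le_trans ?_ (measure_mono hsub)
      rw [Real.volume_Icc]
      exact ENNReal.ofReal_le_ofReal (by linarith)

/-- Lower bound for the measure of a torus ball in the cube. -/
lemma ballPi (d : ℕ) (y : Fin d → ℝ) (hy : y ∈ Set.Icc (0 : Fin d → ℝ) 1) (r : ℝ)
    (hr0 : 0 ≤ r) (hr : r ≤ 1/2) :
    ENNReal.ofReal ((2*r)^d) ≤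
      unifCube d {x : Fin d → ℝ | ∀ i, min |y i - x i| (1 - |y i - x i|) ≤ r} := by
  rw [unifCube, Measure.restrict_apply (measSet1 y r)]
  have hset : {x : Fin d → ℝ | ∀ i, min |y i - x i| (1 - |y i - x i|) ≤ r} ∩ Set.Icc 0 1 =
      Set.pi Set.univ fun i =>
        {t : ℝ | min |y i - t| (1 - |y i - t|) ≤ r} ∩ Set.Icc 0 1 := by
    ext x
    simp only [Set.mem_inter_iff, Set.mem_setOf_eq, Set.mem_pi, Set.mem_univ, forall_true_iff,
      ← Set.pi_univ_Icc, true_implies, Pi.zero_apply, Pi.one_apply]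
    constructor
    · rintro ⟨h1, h2⟩ i; exact ⟨h1 i, h2 i⟩
    · intro h; exact ⟨fun i => (h i).1, fun i => (h i).2⟩
  rw [hset, volume_pi, Measure.pi_pi]
  calc ENNReal.ofReal ((2*r)^d) = ∏ _i : Fin d, ENNReal.ofReal (2*r) := by
        rw [Finset.prod_const, ← ENNReal.ofReal_pow (by linarith)]
        simp
    _ ≤ _ := Finset.prod_le_prod' fun i _ =>
        ball1d (y i) r (hy.1 i) (hy.2 i) hr0 hr

/-- For independent uniform positions on the torus, the probability that the three torus-ball
events defining a geometric triangle on vertices with weights `w_a, w_b, w_c ≥ w₀` all occur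
is at least `(w₀²/(μ k))²`, provided `w₀²/(μ k 2^d) ≤ 2^(-d)`. -/
theorem triangle_position_probability_lower_bound
    (d k : ℕ) (hd : 1 ≤ d) (hk : 1 ≤ k) (μ w0 wa wb wc : ℝ)
    (hμ : 0 < μ) (hw0 : 0 < w0) (hwa : w0 ≤ wa) (hwb : w0 ≤ wb) (hwc : w0 ≤ wc)
    (hfit : w0 ^ 2 / (μ * k * 2 ^ d) ≤ ((2:ℝ) ^ d)⁻¹) :
    ENNReal.ofReal ((w0 ^ 2 / (μ * k)) ^ 2) ≤
      ((unifCube d).prod ((unifCube d).prod (unifCube d)))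
        {p : (Fin d → ℝ) × (Fin d → ℝ) × (Fin d → ℝ) |
          torusDist d p.1 p.2.1 ^ d ≤ wa * wb / (μ * k) ∧
          torusDist d p.2.1 p.2.2 ^ d ≤ wb * wc / (μ * k) ∧
          torusDist d p.1 p.2.2 ^ d ≤ wa * wc / (μ * k)} := by
  haveI : Nonempty (Fin d) := ⟨⟨0, hd⟩⟩
  haveI : SFinite (unifCube d) := by unfold unifCube; infer_instance
  have hkR : (0:ℝ) < k := by exact_mod_cast hk
  have hμk : (0:ℝ) < μ * k := mul_pos hμ hkR
  set t : ℝ := w0 ^ 2 / (μ * k) with ht_def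
  have ht : 0 < t := div_pos (pow_pos hw0 2) hμk
  have h2d : (0:ℝ) < 2 ^ d := by positivity
  set x : ℝ := t / 2 ^ d with hx_def
  have hx : 0 < x := div_pos ht h2d
  have hxeq : w0 ^ 2 / (μ * k * 2 ^ d) = x := by
    rw [hx_def, ht_def, div_div]
  set r : ℝ := x ^ ((d:ℝ)⁻¹) with hr_def
  have hr0 : 0 ≤ r := Real.rpow_nonneg hx.le _
  have hdR : ((d:ℝ)) ≠ 0 := by positivity
  have hrd : r ^ d = x := by
    rw [hr_def, ← Real.rpow_natCast (x ^ ((d:ℝ)⁻¹)) d, ← Real.rpow_mul hx.le,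
      inv_mul_cancel₀ hdR, Real.rpow_one]
  have hr2 : r ≤ 1/2 := by
    have hx2 : x ≤ (1/2:ℝ) ^ d := by
      rw [← hxeq]
      calc w0 ^ 2 / (μ * k * 2 ^ d) ≤ ((2:ℝ) ^ d)⁻¹ := hfit
        _ = (1/2:ℝ) ^ d := by rw [one_div, inv_pow]
    refine le_of_pow_le_pow_left₀ (n := d) (by omega) (by norm_num) ?_
    rw [hrd]; exact hx2
  have h2rd : (2*r) ^ d = t := by
    rw [mul_pow, hrd, hx_def, mul_div_cancel₀ _ (ne_of_gt h2d)]
  -- the two auxiliary events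
  set S1 : Set ((Fin d → ℝ) × (Fin d → ℝ) × (Fin d → ℝ)) :=
    {p | ∀ i, min |p.1 i - p.2.1 i| (1 - |p.1 i - p.2.1 i|) ≤ r} with hS1_def
  set S2 : Set ((Fin d → ℝ) × (Fin d → ℝ) × (Fin d → ℝ)) :=
    {p | ∀ i, min |p.2.1 i - p.2.2 i| (1 - |p.2.1 i - p.2.2 i|) ≤ r} with hS2_def
  have hS1 : MeasurableSet S1 :=
    measSetPair (fun p : (Fin d → ℝ) × (Fin d → ℝ) × (Fin d → ℝ) => p.1) (fun p => p.2.1)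
      (fun i => (measurable_pi_apply i).comp measurable_fst)
      (fun i => (measurable_pi_apply i).comp (measurable_fst.comp measurable_snd)) r
  have hS2 : MeasurableSet S2 :=
    measSetPair (fun p : (Fin d → ℝ) × (Fin d → ℝ) × (Fin d → ℝ) => p.2.1) (fun p => p.2.2)
      (fun i => (measurable_pi_apply i).comp (measurable_fst.comp measurable_snd))
      (fun i => (measurable_pi_apply i).comp (measurable_snd.comp measurable_snd)) r
  set K : Set ((Fin d → ℝ) × (Fin d → ℝ) × (Fin d → ℝ)) :=
    (Set.Icc 0 1) ×ˢ ((Set.Icc 0 1) ×ˢ (Set.Icc 0 1)) with hK_def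
  have hK : MeasurableSet K :=
    measurableSet_Icc.prod (measurableSet_Icc.prod measurableSet_Icc)
  -- helper facts about torusDist
  have habs1 : ∀ (u v : Fin d → ℝ), u ∈ Set.Icc (0 : Fin d → ℝ) 1 →
      v ∈ Set.Icc (0 : Fin d → ℝ) 1 → ∀ i, |u i - v i| ≤ 1 := by
    intro u v hu hv i
    have h1 := hu.1 i; have h2 := hu.2 i; have h3 := hv.1 i; have h4 := hv.2 i
    simp only [Pi.zero_apply, Pi.one_apply] at h1 h2 h3 h4
    exact abs_le.2 ⟨by linarith, by linarith⟩
  have hnn : ∀ (u v : Fin d → ℝ), u ∈ Set.Icc (0 : Fin d → ℝ) 1 →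
      v ∈ Set.Icc (0 : Fin d → ℝ) 1 → 0 ≤ torusDist d u v := by
    intro u v hu hv
    have i0 : Fin d := ⟨0, hd⟩
    have h1 : 0 ≤ min |u i0 - v i0| (1 - |u i0 - v i0|) :=
      le_min (abs_nonneg _) (by linarith [habs1 u v hu hv i0])
    rw [torusDist]
    exact le_trans h1 (le_ciSup (f := fun i => min |u i - v i| (1 - |u i - v i|))
      (Set.Finite.bddAbove (Set.finite_range _)) i0)
  -- inclusion of the auxiliary event in the target event
  have hincl : (S1 ∩ S2) ∩ K ⊆
      {p : (Fin d → ℝ) × (Fin d → ℝ) × (Fin d → ℝ) |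
          torusDist d p.1 p.2.1 ^ d ≤ wa * wb / (μ * k) ∧
          torusDist d p.2.1 p.2.2 ^ d ≤ wb * wc / (μ * k) ∧
          torusDist d p.1 p.2.2 ^ d ≤ wa * wc / (μ * k)} := by
    rintro p ⟨⟨hp1, hp2⟩, hpa, hpb, hpc⟩
    have hxt : x ≤ t := by
      rw [hx_def]
      exact div_le_self ht.le (one_le_pow₀ (by norm_num))
    have d1 : torusDist d p.1 p.2.1 ≤ r := ciSup_le hp1
    have d2 : torusDist d p.2.1 p.2.2 ≤ r := ciSup_le hp2
    have d3 : torusDist d p.1 p.2.2 ≤ 2 * r := by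
      refine ciSup_le fun i => ?_
      have ha0 := hpa.1 i; have ha1 := hpa.2 i
      have hb0 := hpb.1 i; have hb1 := hpb.2 i
      have hc0 := hpc.1 i; have hc1 := hpc.2 i
      simp only [Pi.zero_apply, Pi.one_apply] at ha0 ha1 hb0 hb1 hc0 hc1
      exact tri1d ha0 ha1 hb0 hb1 hc0 hc1 hr2 (hp1 i) (hp2 i)
    refine ⟨?_, ?_, ?_⟩
    · calc torusDist d p.1 p.2.1 ^ d ≤ r ^ d := pow_le_pow_left₀ (hnn _ _ hpa hpb) d1 d
        _ = x := hrd
        _ ≤ t := hxt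
        _ ≤ wa * wb / (μ * k) := (div_le_div_iff_of_pos_right hμk).mpr (by nlinarith)
    · calc torusDist d p.2.1 p.2.2 ^ d ≤ r ^ d := pow_le_pow_left₀ (hnn _ _ hpb hpc) d2 d
        _ = x := hrd
        _ ≤ t := hxt
        _ ≤ wb * wc / (μ * k) := (div_le_div_iff_of_pos_right hμk).mpr (by nlinarith)
    · calc torusDist d p.1 p.2.2 ^ d ≤ (2*r) ^ d := pow_le_pow_left₀ (hnn _ _ hpa hpc) d3 d
        _ = t := h2rd
        _ ≤ wa * wc / (μ * k) := (div_le_div_iff_of_pos_right hμk).mpr (by nlinarith)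
  refine le_trans ?_ (measure_mono hincl)
  -- removing the cube constraint
  have hμ3eq : ((unifCube d).prod ((unifCube d).prod (unifCube d))) ((S1 ∩ S2) ∩ K)
      = ((unifCube d).prod ((unifCube d).prod (unifCube d))) (S1 ∩ S2) := by
    simp only [unifCube]
    rw [Measure.prod_restrict, Measure.prod_restrict,
      Measure.restrict_apply ((hS1.inter hS2).inter hK),
      Measure.restrict_apply (hS1.inter hS2), ← hK_def, Set.inter_assoc, Set.inter_self]
  rw [hμ3eq]
  have hofReal : ENNReal.ofReal (t ^ 2) = ENNReal.ofReal t * ENNReal.ofReal t := by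
    rw [sq, ENNReal.ofReal_mul ht.le]
  have hae : ∀ᵐ a ∂(unifCube d), a ∈ Set.Icc (0 : Fin d → ℝ) 1 := by
    rw [unifCube]; exact ae_restrict_mem measurableSet_Icc
  -- the inner (two-variable) bound
  have hslice : ∀ a ∈ Set.Icc (0 : Fin d → ℝ) 1,
      ENNReal.ofReal t * ENNReal.ofReal t ≤
        ((unifCube d).prod (unifCube d)) (Prod.mk a ⁻¹' (S1 ∩ S2)) := by
    intro a ha
    rw [Measure.prod_apply ((hS1.inter hS2).preimage measurable_prodMk_left)]
    have hpre : ∀ b : Fin d → ℝ, Prod.mk b ⁻¹' (Prod.mk a ⁻¹' (S1 ∩ S2)) =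
        {c : Fin d → ℝ | (∀ i, min |a i - b i| (1 - |a i - b i|) ≤ r) ∧
                 (∀ i, min |b i - c i| (1 - |b i - c i|) ≤ r)} := fun b =>
      Set.ext fun c => Iff.rfl
    set A : Set (Fin d → ℝ) := {b | ∀ i, min |a i - b i| (1 - |a i - b i|) ≤ r} with hA_def
    have hA : MeasurableSet A := measSet1 a r
    calc ENNReal.ofReal t * ENNReal.ofReal t
        ≤ ENNReal.ofReal t * unifCube d A := by
          refine mul_le_mul_right ?_ _
          rw [← h2rd]; exact ballPi d a ha r hr0 hr2
      _ = ∫⁻ b, A.indicator (fun _ => ENNReal.ofReal t) b ∂(unifCube d) := by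
          rw [lintegral_indicator hA, setLIntegral_const]
      _ ≤ ∫⁻ b, unifCube d (Prod.mk b ⁻¹' (Prod.mk a ⁻¹' (S1 ∩ S2))) ∂(unifCube d) := by
          refine lintegral_mono_ae ?_
          filter_upwards [hae] with b hb
          rw [hpre b]
          by_cases hbA : b ∈ A
          · rw [Set.indicator_of_mem hbA]
            have hseteq : {c : Fin d → ℝ | (∀ i, min |a i - b i| (1 - |a i - b i|) ≤ r) ∧
                 (∀ i, min |b i - c i| (1 - |b i - c i|) ≤ r)} =
                 {c : Fin d → ℝ | ∀ i, min |b i - c i| (1 - |b i - c i|) ≤ r} := by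
              ext c; exact and_iff_right hbA
            rw [hseteq, ← h2rd]
            exact ballPi d b hb r hr0 hr2
          · rw [Set.indicator_of_notMem hbA]; exact zero_le
  -- outer bound
  rw [hofReal, Measure.prod_apply (hS1.inter hS2)]
  calc ENNReal.ofReal t * ENNReal.ofReal t
      = ∫⁻ _a, ENNReal.ofReal t * ENNReal.ofReal t ∂(unifCube d) := by
        rw [lintegral_const]
        have h1 : unifCube d Set.univ = 1 := by
          rw [unifCube, Measure.restrict_apply_univ, Real.volume_Icc_pi]
          simp
        rw [h1, mul_one]
    _ ≤ ∫⁻ a, ((unifCube d).prod (unifCube d)) (Prod.mk a ⁻¹' (S1 ∩ S2)) ∂(unifCube d) := by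
        refine lintegral_mono_ae ?_
        filter_upwards [hae] with a ha using hslice a ha
end
end
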